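/- arXiv:1406.7346 — 9 statements merged into one kernel-verified Lean document; each statement's English description precedes it below -/
import Mathlib

section
/- For a finite set A of k integers and an integer h ≥ 2, the h-fold sumset hA satisfies |hA| = h·k − h + 1 if and only if A is a k-term arithmetic progression. -/
open Finset

/-- `A` is a `k`-term arithmetic progression of integers. -/
def IsAPFinset (A : Finset ℤ) (k : ℕ) : Prop :=
  ∃ a d : ℤ, 0 < d ∧ A = (Finset.range k).image (fun i : ℕ => a + (i : ℤ) * d)

open Pointwise

/-! Cauchy–Davenport for linear orders, `#(A + B) ≥ #A + #B - 1`, gives by induction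
`#(h • A) ≥ h (k - 1) + 1`, and a progression attains this. Conversely, equality makes
`A + (h - 1) • A` extremal for Cauchy–Davenport. For an extremal pair `A, B` with `M = max A` and
`b₁ < b₂` the two smallest elements of `B`, the union `(A + b₁) ∪ (M + B)` already has `#A + #B - 1`
elements, hence is all of `A + B`; locating `a + b₂` in it shows `a + (b₂ - b₁) ∈ A` for every
`a < M` in `A`. Such a shift maps `A \ {M}` onto `A \ {m}`, and comparing sums forces
`M = m + (k - 1)(b₂ - b₁)`, so `A` is a progression. -/

theorem setOf_sum_fin_eq_coe_nsmul {M : Type*} [AddCommMonoid M] [DecidableEq M]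
    (A : Finset M) (n : ℕ) :
    {z : M | ∃ f : Fin n → M, (∀ i, f i ∈ A) ∧ z = ∑ i, f i} = ↑(n • A) := by
  ext z
  simp only [Set.mem_ofPred_eq, mem_coe, mem_nsmul, List.sum_ofFn]
  constructor
  · rintro ⟨f, hf, rfl⟩
    exact ⟨fun i => ⟨f i, hf i⟩, rfl⟩
  · rintro ⟨f, rfl⟩
    exact ⟨fun i => f i, fun i => (f i).2, rfl⟩

theorem le_card_nsmul_of_linearOrder {α : Type*} [LinearOrder α] [AddMonoid α] [IsCancelAdd α]
    [AddLeftMono α] [AddRightMono α] {A : Finset α} (hA : A.Nonempty) :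
    ∀ n : ℕ, n * (#A - 1) + 1 ≤ #(n • A)
  | 0 => by simp
  | n + 1 => by
    have ih := le_card_nsmul_of_linearOrder hA n
    have hA1 : 1 ≤ #A := hA.card_pos
    calc (n + 1) * (#A - 1) + 1 ≤ #(n • A) + #A - 1 := by rw [Nat.succ_mul]; omega
      _ ≤ #((n + 1) • A) := by
        rw [succ_nsmul]
        exact cauchy_davenport_add_of_linearOrder_isCancelAdd (hA.nsmul (n := n)) hA

theorem add_natCast_mul_injective {a d : ℤ} (hd : d ≠ 0) :
    Function.Injective fun i : ℕ => a + (i : ℤ) * d := fun _ _ h =>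
  Int.ofNat_inj.1 (mul_right_cancel₀ hd (add_left_cancel h))

theorem nsmul_image_range_subset (a d : ℤ) (k : ℕ) :
    ∀ n : ℕ, n • (range k).image (fun i : ℕ => a + (i : ℤ) * d) ⊆
      (range (n * (k - 1) + 1)).image (fun i : ℕ => (n : ℤ) * a + (i : ℤ) * d)
  | 0 => by simp [← singleton_zero]
  | n + 1 => by
    intro x hx
    rw [succ_nsmul] at hx
    obtain ⟨y, hy, z, hz, rfl⟩ := mem_add.1 hx
    obtain ⟨i, hi, rfl⟩ := mem_image.1 (nsmul_image_range_subset a d k n hy)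
    obtain ⟨j, hj, rfl⟩ := mem_image.1 hz
    rw [mem_range] at hi hj
    refine mem_image.2 ⟨i + j, mem_range.2 ?_, by push_cast; ring⟩
    rw [Nat.succ_mul]
    omega

theorem IsAPFinset.card_nsmul_le {A : Finset ℤ} {k : ℕ} (hA : IsAPFinset A k) (n : ℕ) :
    #(n • A) ≤ n * (k - 1) + 1 := by
  obtain ⟨a, d, -, rfl⟩ := hA
  exact (card_le_card (nsmul_image_range_subset a d k n)).trans
    (card_image_le.trans (card_range _).le)

theorem isAPFinset_of_forall_add_mem {A : Finset ℤ} (hA : A.Nonempty) {d : ℤ} (hd : 0 < d)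
    (hstep : ∀ a ∈ A, a ≠ A.max' hA → a + d ∈ A) : IsAPFinset A #A := by
  set m := A.min' hA
  set M := A.max' hA
  have hm := A.min'_mem hA
  have hM := A.max'_mem hA
  have hshift : (A.erase M).image (· + d) = A.erase m := by
    refine eq_of_subset_of_card_le ?_ ?_
    · intro x hx
      obtain ⟨a, ha, rfl⟩ := mem_image.1 hx
      obtain ⟨haM, ha⟩ := mem_erase.1 ha
      have := A.min'_le a ha
      exact mem_erase.2 ⟨by omega, hstep a ha haM⟩
    · rw [card_image_of_injective _ (add_left_injective d), card_erase_of_mem hm,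
        card_erase_of_mem hM]
  have hMm : M = m + ((#A - 1 : ℕ) : ℤ) * d := by
    have := congrArg (fun s => ∑ x ∈ s, x) hshift
    rw [sum_image fun _ _ _ _ h => add_right_cancel h, sum_add_distrib, sum_const,
      card_erase_of_mem hM, sum_erase_eq_sub hM, sum_erase_eq_sub hm, nsmul_eq_mul] at this
    linarith
  have hinj := add_natCast_mul_injective (a := m) hd.ne'
  have hchain : ∀ i < #A, m + (i : ℤ) * d ∈ A := by
    intro i
    induction i with
    | zero => intro _; simpa using hm
    | succ i ih =>
      intro hi
      have hne : m + (i : ℤ) * d ≠ M := fun h => by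
        have := hinj (h.trans hMm)
        omega
      simpa [add_mul, add_assoc] using hstep _ (ih (by omega)) hne
  refine ⟨m, d, hd, (eq_of_subset_of_card_le ?_ ?_).symm⟩
  · intro x hx
    obtain ⟨i, hi, rfl⟩ := mem_image.1 hx
    exact hchain i (mem_range.1 hi)
  · rw [card_image_of_injective _ hinj, card_range]

theorem isAPFinset_of_card_add_le {A B : Finset ℤ} (hA : A.Nonempty) (hB : 2 ≤ #B)
    (hAB : #(A + B) + 1 ≤ #A + #B) : IsAPFinset A #A := by
  have hB₀ : B.Nonempty := card_pos.1 (by omega)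
  set M := A.max' hA
  set b₁ := B.min' hB₀
  have hb₁ : b₁ ∈ B := B.min'_mem hB₀
  have hB₁ : (B.erase b₁).Nonempty := by
    rw [← card_pos, card_erase_of_mem hb₁]; omega
  set b₂ := (B.erase b₁).min' hB₁
  obtain ⟨hb₂b₁, hb₂⟩ := mem_erase.1 ((B.erase b₁).min'_mem hB₁)
  have hgap : ∀ b ∈ B, b < b₂ → b = b₁ := fun b hb hbb => by
    by_contra hne
    exact (min'_le _ b (mem_erase.2 ⟨hne, hb⟩)).not_gt hbb
  have hb₁₂ : b₁ < b₂ := lt_of_le_of_ne (B.min'_le _ hb₂) (Ne.symm hb₂b₁)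
  have hCsub : A.image (· + b₁) ∪ B.image (M + ·) ⊆ A + B := by
    intro x hx
    rcases mem_union.1 hx with hx | hx
    · obtain ⟨a, ha, rfl⟩ := mem_image.1 hx
      exact add_mem_add ha hb₁
    · obtain ⟨b, hb, rfl⟩ := mem_image.1 hx
      exact add_mem_add (A.max'_mem hA) hb
  have hinter : A.image (· + b₁) ∩ B.image (M + ·) ⊆ {M + b₁} := by
    intro x hx
    obtain ⟨⟨a, ha, rfl⟩, ⟨b, hb, hab⟩⟩ := by simpa only [mem_inter, mem_image] using hx
    have := A.le_max' a ha
    have := B.min'_le b hb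
    rw [mem_singleton]
    omega
  have hCcard : #A + #B ≤ #(A.image (· + b₁) ∪ B.image (M + ·)) + 1 := by
    have := card_union_add_card_inter (A.image (· + b₁)) (B.image (M + ·))
    rw [card_image_of_injective _ (add_left_injective b₁),
      card_image_of_injective _ (add_right_injective M)] at this
    have := card_le_card hinter
    rw [card_singleton] at this
    omega
  have hC : A + B = A.image (· + b₁) ∪ B.image (M + ·) :=
    (eq_of_subset_of_card_le hCsub (by omega)).symm
  refine isAPFinset_of_forall_add_mem hA (sub_pos.2 hb₁₂) fun a ha haM => ?_
  have haM' : a < M := lt_of_le_of_ne (A.le_max' a ha) haM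
  rcases mem_union.1 (hC ▸ add_mem_add ha hb₂) with h | h
  · obtain ⟨a', ha', he⟩ := mem_image.1 h
    convert ha' using 1
    omega
  · obtain ⟨b, hb, he⟩ := mem_image.1 h
    obtain rfl := hgap b hb (by omega)
    convert A.max'_mem hA using 1
    omega

theorem hfold_sumset_eq_iff_AP (A : Finset ℤ) (k h : ℕ) (hk : A.card = k) (hk1 : 1 ≤ k)
    (hh : 2 ≤ h) :
    (({z : ℤ | ∃ f : Fin h → ℤ, (∀ i, f i ∈ A) ∧ z = ∑ i, f i}.ncard : ℤ)
        = (h : ℤ) * k - h + 1) ↔ IsAPFinset A k := by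
  have hA : A.Nonempty := card_pos.1 (by omega)
  have hlow := le_card_nsmul_of_linearOrder hA
  rw [setOf_sum_fin_eq_coe_nsmul, Set.ncard_coe_finset]
  subst hk
  constructor
  · intro hcard
    obtain hA1 | hk2 := eq_or_lt_of_le hk1
    · obtain ⟨a, rfl⟩ := card_eq_one.1 hA1.symm
      exact ⟨a, 1, one_pos, by simp⟩
    obtain ⟨m, rfl⟩ : ∃ m, h = m + 1 := ⟨h - 1, by omega⟩
    have hm : 1 ≤ m * (#A - 1) := Nat.one_le_iff_ne_zero.2 (mul_ne_zero (by omega) (by omega))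
    have hmA := hlow m
    have hB : 2 ≤ #(m • A) := by omega
    rw [succ_nsmul'] at hcard
    zify [hk1] at hcard hmA
    exact isAPFinset_of_card_add_le hA hB (by linarith)
  · intro hAP
    have hcard := le_antisymm (hAP.card_nsmul_le h) (hlow h)
    rw [hcard]
    push_cast [Nat.cast_sub hk1]
    ring
end

section
/- Let A be a set of k integers and 1 ≤ h ≤ k. Then the restricted sumset h^A of sums of h distinct elements of A satisfies |h^A| ≥ h·k − h² + 1. -/
open Finset

theorem restricted_sumset_lower_bound (A : Finset ℤ) (k h : ℕ) (hk : A.card = k)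
    (hh1 : 1 ≤ h) (hhk : h ≤ k) :
    ((h : ℤ) * k - (h : ℤ) ^ 2 + 1) ≤
      ({z : ℤ | ∃ f : Fin h → ℤ, Function.Injective f ∧ (∀ i, f i ∈ A) ∧
        z = ∑ i, f i}.ncard : ℤ) := by
  classical
  set X := {z : ℤ | ∃ f : Fin h → ℤ, Function.Injective f ∧ (∀ i, f i ∈ A) ∧
        z = ∑ i, f i} with hX
  set d := k - h with hd
  have hdk : h + d = k := by omega
  set b : ℕ → ℤ := fun n => if hn : n < k then (A.orderIsoOfFin hk ⟨n, hn⟩ : ℤ) else 0 with hb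
  have hb_mem : ∀ n, n < k → b n ∈ A := by
    intro n hn
    simp only [hb, dif_pos hn]
    exact (A.orderIsoOfFin hk ⟨n, hn⟩).2
  have hb_lt : ∀ n1 n2, n1 < n2 → n2 < k → b n1 < b n2 := by
    intro n1 n2 h12 h2
    have h1 : n1 < k := lt_trans h12 h2
    simp only [hb, dif_pos h1, dif_pos h2]
    exact_mod_cast (A.orderIsoOfFin hk).strictMono
      (show (⟨n1, h1⟩ : Fin k) < ⟨n2, h2⟩ from h12)
  have hb_le : ∀ n1 n2, n1 ≤ n2 → n2 < k → b n1 ≤ b n2 := by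
    intro n1 n2 h12 h2
    rcases eq_or_lt_of_le h12 with rfl | hlt
    · exact le_refl _
    · exact (hb_lt _ _ hlt h2).le
  set cfg : ℕ → ℕ → ℕ := fun m j =>
    if j + m / d + 1 < h then j else if j + m / d + 1 = h then j + m % d else j + d with hcfg
  have hr : ∀ m, m ≤ h * d → m % d ≤ d := by
    intro m hm
    rcases Nat.eq_zero_or_pos d with h0 | h0
    · have : m = 0 := by rw [h0, Nat.mul_zero] at hm; omega
      simp [this, h0]
    · exact (Nat.mod_lt m h0).le
  have hck : ∀ m, m ≤ h * d → ∀ j, j < h → cfg m j < k := by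
    intro m hm j hj
    have := hr m hm
    simp only [hcfg]
    split_ifs <;> omega
  have hcfg_mono : ∀ m, m ≤ h * d → ∀ j1 j2, j1 < j2 → cfg m j1 < cfg m j2 := by
    intro m hm j1 j2 h12
    have := hr m hm
    simp only [hcfg]
    split_ifs <;> omega
  have hstep : ∀ m, m < h * d →
      (∀ j, cfg m j ≤ cfg (m + 1) j) ∧
        cfg m (h - 1 - m / d) + 1 = cfg (m + 1) (h - 1 - m / d) := by
    intro m hm
    rcases Nat.eq_zero_or_pos d with h0 | hd0
    · rw [h0, Nat.mul_zero] at hm; omega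
    have hqr : d * (m / d) + m % d = m := Nat.div_add_mod m d
    have hrd : m % d < d := Nat.mod_lt m hd0
    have hqh : m / d < h := by
      rw [Nat.div_lt_iff_lt_mul hd0]
      omega
    set q := m / d with hq
    set r := m % d with hrr
    rcases lt_or_ge (r + 1) d with hcase | hcase
    · -- same quotient
      have e0 : m + 1 = (r + 1) + d * q := by omega
      have e1 : (m + 1) / d = q := by
        rw [e0, Nat.add_mul_div_left _ _ hd0, Nat.div_eq_of_lt hcase, Nat.zero_add]
      have e2 : (m + 1) % d = r + 1 := by
        rw [e0, Nat.add_mul_mod_self_left, Nat.mod_eq_of_lt hcase]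
      constructor
      · intro j
        simp only [hcfg, e1, e2]
        split_ifs <;> omega
      · simp only [hcfg, e1, e2]
        split_ifs <;> omega
    · -- quotient increases
      have hre : r + 1 = d := by omega
      have e0 : m + 1 = d * (q + 1) := by
        have hx : d * (q + 1) = d * q + d := by ring
        omega
      have e1 : (m + 1) / d = q + 1 := by
        rw [e0, Nat.mul_div_cancel_left _ hd0]
      have e2 : (m + 1) % d = 0 := by
        rw [e0, Nat.mul_mod_right]
      constructor
      · intro j
        simp only [hcfg, e1, e2]
        split_ifs <;> omega
      · simp only [hcfg, e1, e2]
        split_ifs <;> omega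
  set S : ℕ → ℤ := fun m => ∑ j ∈ Finset.range h, b (cfg m j) with hS
  have hS_mem : ∀ m, m ≤ h * d → S m ∈ X := by
    intro m hm
    simp only [hX, Set.mem_setOf_eq]
    refine ⟨fun i => b (cfg m i.1), ?_, ?_, ?_⟩
    · intro i1 i2 he
      by_contra hne
      have hne' : (i1 : ℕ) ≠ (i2 : ℕ) := fun hh => hne (Fin.ext hh)
      rcases lt_or_gt_of_ne hne' with hlt | hlt
      · exact absurd he (ne_of_lt (hb_lt _ _ (hcfg_mono m hm _ _ hlt) (hck m hm i2.1 i2.2)))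
      · exact absurd he.symm
          (ne_of_lt (hb_lt _ _ (hcfg_mono m hm _ _ hlt) (hck m hm i1.1 i1.2)))
    · intro i
      exact hb_mem _ (hck m hm i.1 i.2)
    · simp only [hS]
      exact (Fin.sum_univ_eq_sum_range (fun j => b (cfg m j)) h).symm
  have hS_mono : ∀ m, m < h * d → S m < S (m + 1) := by
    intro m hm
    apply Finset.sum_lt_sum
    · intro j hj
      exact hb_le _ _ ((hstep m hm).1 j) (hck (m + 1) (by omega) j (Finset.mem_range.mp hj))
    · have hjh : h - 1 - m / d < h := by
        generalize m / d = q
        omega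
      refine ⟨h - 1 - m / d, Finset.mem_range.mpr hjh, ?_⟩
      have h2 := (hstep m hm).2
      exact hb_lt _ _ (h2 ▸ Nat.lt_succ_self _) (hck (m + 1) (by omega) _ hjh)
  have key : ∀ m2, m2 ≤ h * d → ∀ m1, m1 < m2 → S m1 < S m2 := by
    intro m2
    induction m2 with
    | zero => intro _ m1 hm1; omega
    | succ n ih =>
      intro hle m1 hm1
      rcases (by omega : m1 = n ∨ m1 < n) with rfl | h'
      · exact hS_mono _ (by omega)
      · exact (ih (by omega) _ h').trans (hS_mono n (by omega))
  have hinj : Set.InjOn S ↑(Finset.range (h * d + 1)) := by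
    intro x hx y hy hxy
    simp only [Finset.coe_range, Set.mem_Iio] at hx hy
    by_contra hne
    rcases lt_or_gt_of_ne hne with hlt | hlt
    · exact absurd hxy (ne_of_lt (key y (by omega) x hlt))
    · exact absurd hxy.symm (ne_of_lt (key x (by omega) y hlt))
  set T := (Finset.range (h * d + 1)).image S with hT
  have hTcard : T.card = h * d + 1 := by
    rw [hT, Finset.card_image_of_injOn hinj, Finset.card_range]
  have hTsub : ↑T ⊆ X := by
    intro z hz
    simp only [hT, Finset.coe_image, Set.mem_image, Finset.coe_range, Set.mem_Iio] at hz
    obtain ⟨m, hm, rfl⟩ := hz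
    exact hS_mem m (by omega)
  have hXfin : X.Finite := by
    apply Set.Finite.subset
      (Finset.finite_toSet ((Fintype.piFinset fun _ : Fin h => A).image fun g => ∑ i, g i))
    rintro z ⟨f, hfinj, hfA, rfl⟩
    simp only [Finset.coe_image, Set.mem_image, Finset.mem_coe, Fintype.mem_piFinset]
    exact ⟨f, hfA, rfl⟩
  have hcard : (h * d + 1 : ℕ) ≤ X.ncard := by
    calc h * d + 1 = T.card := hTcard.symm
      _ = (↑T : Set ℤ).ncard := (Set.ncard_coe_finset T).symm
      _ ≤ X.ncard := Set.ncard_le_ncard hTsub hXfin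
  have hcast : ((h * d + 1 : ℕ) : ℤ) = (h : ℤ) * k - (h : ℤ) ^ 2 + 1 := by
    have hdc : (d : ℤ) = (k : ℤ) - (h : ℤ) := by omega
    push_cast
    rw [hdc]
    ring
  have := (Nat.cast_le (α := ℤ)).mpr hcard
  linarith
end

section
/- Let k ≥ 5 and 2 ≤ h ≤ k−2. If A is a set of k integers with |h^A| = h·k − h² + 1, then A is a k-term arithmetic progression. -/
/-!
Write `A = {a 0 < ⋯ < a (k - 1)}`, `h^A` for the set of sums of `h` distinct elements of `A`, and
`A'` for `A` without its largest element. The sums in `h^A` containing `a (k - 1)`, together with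
the `k - h` sums `a 0 + ⋯ + a (h - 2) + a j` (`h - 1 ≤ j ≤ k - 2`) lying below all of them, give
`|h^A| ≥ |(h - 1)^A'| + (k - h)`. Hence `|h^A| ≥ h (k - h) + 1`, and equality for `A` forces
equality for `A'` and, applied to `-A`, for `A` without its smallest element; by induction on `h`
both are arithmetic progressions, and as they overlap, so is `A`. For `h = 2` the `2k - 3` sums
are enumerated increasingly along two lattice paths of index pairs; comparing the two
enumerations gives `a (j + 1) - a j = a 1 - a 0` for `j ≥ 2`, and `-A` supplies the remaining
difference. The case `h = k - 2` reduces to `h = 2` since `B ↦ A \ B` pairs the `h`-sums with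
the `(k - h)`-sums.
-/

open Finset

section RestrictedSumset

variable {α β : Type*} [DecidableEq α] [DecidableEq β]

def restrictedSumset [AddCommMonoid α] (A : Finset α) (h : ℕ) : Finset α :=
  (A.powersetCard h).image fun B => ∑ x ∈ B, x

section AddCommMonoid

variable [AddCommMonoid α] [AddCommMonoid β] {A B : Finset α} {h : ℕ} {z : α}

lemma mem_restrictedSumset : z ∈ restrictedSumset A h ↔ ∃ B ⊆ A, #B = h ∧ ∑ x ∈ B, x = z := by
  simp [restrictedSumset, mem_powersetCard, and_assoc]

lemma sum_mem_restrictedSumset (hBA : B ⊆ A) (hB : #B = h) :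
    ∑ x ∈ B, x ∈ restrictedSumset A h :=
  mem_restrictedSumset.2 ⟨B, hBA, hB, rfl⟩

lemma add_mem_restrictedSumset_two {x y : α} (hx : x ∈ A) (hy : y ∈ A) (hxy : x ≠ y) :
    x + y ∈ restrictedSumset A 2 := by
  simpa [sum_pair hxy] using
    sum_mem_restrictedSumset (insert_subset hx (singleton_subset_iff.2 hy)) (card_pair hxy)

lemma image_add_restrictedSumset_subset {x : α} (hx : x ∉ A) :
    (restrictedSumset A h).image (· + x) ⊆ restrictedSumset (insert x A) (h + 1) := by
  intro z hz
  obtain ⟨s, hs, rfl⟩ := mem_image.1 hz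
  obtain ⟨B, hBA, rfl, rfl⟩ := mem_restrictedSumset.1 hs
  have hxB : x ∉ B := fun hxB => hx (hBA hxB)
  simpa [sum_insert hxB, add_comm] using
    sum_mem_restrictedSumset (insert_subset_insert x hBA) (card_insert_of_notMem hxB)

lemma coe_restrictedSumset (A : Finset α) (h : ℕ) :
    (restrictedSumset A h : Set α) =
      {z | ∃ f : Fin h → α, Function.Injective f ∧ (∀ i, f i ∈ A) ∧ z = ∑ i, f i} := by
  ext z
  simp only [mem_coe, mem_restrictedSumset, Set.mem_ofPred_eq]
  constructor
  · rintro ⟨B, hBA, hB, rfl⟩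
    let e := (B.equivFinOfCardEq hB).symm
    refine ⟨fun i => e i, Subtype.val_injective.comp e.injective, fun i => hBA (e i).2, ?_⟩
    rw [← B.sum_coe_sort]
    exact (e.sum_comp fun x => (x : α)).symm
  · rintro ⟨f, hf, hfA, rfl⟩
    refine ⟨univ.image f, fun x hx => ?_, by simp [card_image_of_injective _ hf], ?_⟩
    · obtain ⟨i, -, rfl⟩ := mem_image.1 hx
      exact hfA i
    · rw [sum_image fun i _ j _ hij => hf hij]

lemma restrictedSumset_image (f : α →+ β) (hf : Function.Injective f) (A : Finset α) (h : ℕ) :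
    restrictedSumset (A.image f) h = (restrictedSumset A h).image f := by
  ext z
  simp only [mem_image, mem_restrictedSumset, subset_image_iff]
  constructor
  · rintro ⟨-, ⟨B, hBA, rfl⟩, hB, rfl⟩
    refine ⟨_, ⟨B, hBA, ?_, rfl⟩, ?_⟩
    · rwa [card_image_of_injective _ hf] at hB
    · rw [map_sum, sum_image fun x _ y _ hxy => hf hxy]
  · rintro ⟨-, ⟨B, hBA, hB, rfl⟩, rfl⟩
    refine ⟨_, ⟨B, hBA, rfl⟩, by rwa [card_image_of_injective _ hf], ?_⟩
    rw [map_sum, sum_image fun x _ y _ hxy => hf hxy]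

end AddCommMonoid

section AddCommGroup

variable [AddCommGroup α] {A : Finset α} {h : ℕ}

lemma restrictedSumset_card_sub (hh : h ≤ #A) :
    restrictedSumset A (#A - h) = (restrictedSumset A h).image (∑ x ∈ A, x - ·) := by
  ext z
  simp only [mem_image, mem_restrictedSumset]
  constructor
  · rintro ⟨B, hBA, hB, rfl⟩
    refine ⟨_, ⟨A \ B, sdiff_subset, by rw [card_sdiff_of_subset hBA]; omega, rfl⟩, ?_⟩
    rw [sum_sdiff_eq_sub hBA, sub_sub_cancel]
  · rintro ⟨-, ⟨B, hBA, rfl, rfl⟩, rfl⟩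
    exact ⟨A \ B, sdiff_subset, card_sdiff_of_subset hBA, sum_sdiff_eq_sub hBA⟩

lemma card_restrictedSumset_card_sub (hh : h ≤ #A) :
    #(restrictedSumset A (#A - h)) = #(restrictedSumset A h) := by
  rw [restrictedSumset_card_sub hh, card_image_of_injective _ sub_right_injective]

end AddCommGroup

end RestrictedSumset

lemma sum_range_card_le_sum {M : Type*} [AddCommMonoid M] [PartialOrder M] [IsOrderedAddMonoid M]
    {k : ℕ} {a : ℕ → M} (ha : MonotoneOn a (Set.Iio k)) {I : Finset ℕ} (hI : I ⊆ range k) :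
    ∑ i ∈ range #I, a i ≤ ∑ i ∈ I, a i := by
  induction I using Finset.induction_on_max with
  | empty => simp
  | insert m I hlt ih =>
    have hm : m < k := mem_range.1 (hI (mem_insert_self m I))
    have hmI : m ∉ I := fun hm => lt_irrefl m (hlt m hm)
    have hIm : #I ≤ m := by
      simpa using card_le_card (fun i hi => mem_range.2 (hlt i hi) : I ⊆ range m)
    rw [card_insert_of_notMem hmI, sum_range_succ, sum_insert hmI, add_comm (a m)]
    exact add_le_add (ih ((subset_insert m I).trans hI))
      (ha (Set.mem_Iio.2 (by omega)) (Set.mem_Iio.2 hm) hIm)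

lemma eqOn_of_strictMonoOn_of_card_le {α : Type*} [LinearOrder α] {S : Finset α} {n : ℕ}
    {c d : ℕ → α} (hc : StrictMonoOn c (Set.Iio n)) (hd : StrictMonoOn d (Set.Iio n))
    (hcS : ∀ i < n, c i ∈ S) (hdS : ∀ i < n, d i ∈ S) (hS : #S ≤ n) :
    Set.EqOn c d (Set.Iio n) := by
  have hmono {f : ℕ → α} (hf : StrictMonoOn f (Set.Iio n)) : StrictMono fun i : Fin n => f i :=
    fun i j hij => hf i.2 j.2 hij
  have hcard : #S = n := by
    refine le_antisymm hS ?_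
    simpa using card_le_card_of_injOn (s := univ) (fun i : Fin n => c i) (fun i _ => hcS i i.2)
      (hmono hc).injective.injOn
  intro i hi
  have hc' := congrFun (orderEmbOfFin_unique hcard (fun i => hcS i i.2) (hmono hc)) ⟨i, hi⟩
  have hd' := congrFun (orderEmbOfFin_unique hcard (fun i => hdS i i.2) (hmono hd)) ⟨i, hi⟩
  exact hc'.trans hd'.symm

section Sequences

variable {k h : ℕ} {a : ℕ → ℤ}

lemma sum_range_le_of_mem_restrictedSumset (ha : StrictMonoOn a (Set.Iio k)) {s : ℤ}
    (hs : s ∈ restrictedSumset ((range k).image a) h) : ∑ i ∈ range h, a i ≤ s := by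
  obtain ⟨B, hB, rfl, rfl⟩ := mem_restrictedSumset.1 hs
  obtain ⟨I, hIk, rfl⟩ := subset_image_iff.1 hB
  have hinj : Set.InjOn a I := ha.injOn.mono fun i hi => by simpa using hIk hi
  rw [card_image_of_injOn hinj, sum_image hinj]
  exact sum_range_card_le_sum ha.monotoneOn hIk

lemma card_restrictedSumset_add_le (ha : StrictMonoOn a (Set.Iio (k + 1))) :
    #(restrictedSumset ((range k).image a) h) + (k - h) ≤
      #(restrictedSumset ((range (k + 1)).image a) (h + 1)) := by
  have hinj : Set.InjOn a (Set.Iio (k + 1)) := ha.injOn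
  set P := ∑ i ∈ range h, a i
  set D := (restrictedSumset ((range k).image a) h).image (· + a k)
  set E := (Ico h k).image (P + a ·)
  have hak : a k ∉ (range k).image a := by
    simp only [mem_image, mem_range, not_exists, not_and]
    exact fun i hi hik => hi.ne (hinj (by simp; omega) (by simp) hik)
  have hD : D ⊆ restrictedSumset ((range (k + 1)).image a) (h + 1) := by
    rw [range_add_one, image_insert]
    exact image_add_restrictedSumset_subset hak
  have hE : E ⊆ restrictedSumset ((range (k + 1)).image a) (h + 1) := by
    intro z hz
    obtain ⟨j, hj, rfl⟩ := mem_image.1 hz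
    rw [mem_Ico] at hj
    have hjh : j ∉ range h := by simp; omega
    have hI : insert j (range h) ⊆ range (k + 1) := by
      intro i; simp only [mem_insert, mem_range]; omega
    have hIinj : Set.InjOn a (insert j (range h) : Finset ℕ) :=
      hinj.mono fun i hi => by simpa using hI hi
    have := sum_mem_restrictedSumset (image_subset_image hI) (card_image_of_injOn hIinj)
    rwa [sum_image hIinj, sum_insert hjh, card_insert_of_notMem hjh, card_range, add_comm (a j)]
      at this
  have hED : Disjoint E D := by
    rw [disjoint_left]
    intro z hzE hzD
    obtain ⟨j, hj, rfl⟩ := mem_image.1 hzE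
    obtain ⟨s, hs, hsj⟩ := mem_image.1 hzD
    rw [mem_Ico] at hj
    have hPs := sum_range_le_of_mem_restrictedSumset (ha.mono (Set.Iio_subset_Iio k.le_succ)) hs
    have hjk : a j < a k := ha (by simp; omega) (by simp) hj.2
    omega
  have hEcard : #E = k - h := by
    rw [card_image_of_injOn, Nat.card_Ico]
    exact fun i hi j hj hij => hinj (by simp at hi ⊢; omega) (by simp at hj ⊢; omega)
      (add_left_cancel hij)
  calc #(restrictedSumset ((range k).image a) h) + (k - h) = #D + #E := by
        rw [hEcard, card_image_of_injective _ (add_left_injective _)]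
    _ = #(E ∪ D) := by rw [card_union_of_disjoint hED, add_comm]
    _ ≤ _ := card_le_card (union_subset hE hD)

lemma le_card_restrictedSumset (ha : StrictMonoOn a (Set.Iio k)) (hhk : h ≤ k) :
    h * (k - h) + 1 ≤ #(restrictedSumset ((range k).image a) h) := by
  induction h generalizing k with
  | zero => simp [restrictedSumset]
  | succ h ih =>
    obtain ⟨k, rfl⟩ : ∃ k', k = k' + 1 := ⟨k - 1, by omega⟩
    have hrec := card_restrictedSumset_add_le (h := h) ha
    have hih := ih (k := k) (ha.mono (Set.Iio_subset_Iio k.le_succ)) (by omega)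
    have hmul : (h + 1) * (k + 1 - (h + 1)) = h * (k - h) + (k - h) := by
      rw [Nat.add_sub_add_right]; ring
    omega

lemma card_restrictedSumset_eq_of_succ (ha : StrictMonoOn a (Set.Iio (k + 1))) (hhk : h ≤ k)
    (hcard : #(restrictedSumset ((range (k + 1)).image a) (h + 1)) = (h + 1) * (k - h) + 1) :
    #(restrictedSumset ((range k).image a) h) = h * (k - h) + 1 := by
  have hrec := card_restrictedSumset_add_le (h := h) ha
  have hlow := le_card_restrictedSumset (k := k) (ha.mono (Set.Iio_subset_Iio k.le_succ)) hhk
  have hmul : (h + 1) * (k - h) = h * (k - h) + (k - h) := by ring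
  omega

lemma add_mem_restrictedSumset_two_of_lt (ha : StrictMonoOn a (Set.Iio k)) {i j : ℕ}
    (hij : i < j) (hj : j < k) : a i + a j ∈ restrictedSumset ((range k).image a) 2 :=
  add_mem_restrictedSumset_two (mem_image_of_mem a (mem_range.2 (hij.trans hj)))
    (mem_image_of_mem a (mem_range.2 hj)) (ha (hij.trans hj) hj hij).ne

lemma strictMonoOn_add_comp_of_path (ha : StrictMonoOn a (Set.Iio k)) {n : ℕ} {p q : ℕ → ℕ}
    (hp : ∀ m < n, p m < k) (hq : ∀ m < n, q m < k)
    (hstep : ∀ m, m + 1 < n → p m ≤ p (m + 1) ∧ q m ≤ q (m + 1) ∧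
      p m + q m < p (m + 1) + q (m + 1)) :
    StrictMonoOn (fun m => a (p m) + a (q m)) (Set.Iio n) := by
  refine strictMonoOn_of_lt_add_one Set.ordConnected_Iio fun m _ _ hm => ?_
  obtain ⟨hpm, hqm, hsum⟩ := hstep m hm
  have hp' := hp m (Nat.lt_of_succ_lt hm)
  have hq' := hq m (Nat.lt_of_succ_lt hm)
  have hp'' := hp (m + 1) hm
  have hq'' := hq (m + 1) hm
  rcases hpm.lt_or_eq with hpm | hpm
  · exact add_lt_add_of_lt_of_le (ha hp' hp'' hpm) (ha.monotoneOn hq' hq'' hqm)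
  · rw [hpm]
    exact add_lt_add_of_le_of_lt le_rfl (ha hq' hq'' (by omega))

lemma sub_eq_of_card_restrictedSumset_two_le (ha : StrictMonoOn a (Set.Iio k))
    (hcard : #(restrictedSumset ((range k).image a) 2) ≤ 2 * (k - 2) + 1) {j : ℕ} (hj : 2 ≤ j)
    (hjk : j + 1 < k) : a (j + 1) - a j = a 1 - a 0 := by
  -- the paths `(0,1), …, (0,k-1), (1,k-1), …, (k-2,k-1)` and
  -- `(0,1), (0,2), (1,2), …, (1,k-1), (2,k-1), …, (k-2,k-1)`, both of length `2k - 3`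
  let p₁ m := if m + 1 < k then 0 else m + 2 - k
  let q₁ m := if m + 1 < k then m + 1 else k - 1
  let p₂ m := if m < 2 then 0 else if m < k then 1 else m + 2 - k
  let q₂ m := if m < 2 then m + 1 else if m < k then m else k - 1
  have hmem {p q : ℕ → ℕ} (hpq : ∀ m < 2 * k - 3, p m < q m ∧ q m < k) :
      ∀ m < 2 * k - 3, a (p m) + a (q m) ∈ restrictedSumset ((range k).image a) 2 :=
    fun m hm => add_mem_restrictedSumset_two_of_lt ha (hpq m hm).1 (hpq m hm).2
  have hpath {p q : ℕ → ℕ} (hpq : ∀ m < 2 * k - 3, p m < q m ∧ q m < k)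
      (hstep : ∀ m, m + 1 < 2 * k - 3 → p m ≤ p (m + 1) ∧ q m ≤ q (m + 1) ∧
        p m + q m < p (m + 1) + q (m + 1)) :
      StrictMonoOn (fun m => a (p m) + a (q m)) (Set.Iio (2 * k - 3)) :=
    strictMonoOn_add_comp_of_path ha (fun m hm => by have := hpq m hm; omega)
      (fun m hm => (hpq m hm).2) hstep
  have hpq₁ : ∀ m < 2 * k - 3, p₁ m < q₁ m ∧ q₁ m < k := by
    intro m hm; simp only [p₁, q₁]; split_ifs <;> omega
  have hpq₂ : ∀ m < 2 * k - 3, p₂ m < q₂ m ∧ q₂ m < k := by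
    intro m hm; simp only [p₂, q₂]; split_ifs <;> omega
  have hstep₁ : ∀ m, m + 1 < 2 * k - 3 → p₁ m ≤ p₁ (m + 1) ∧ q₁ m ≤ q₁ (m + 1) ∧
      p₁ m + q₁ m < p₁ (m + 1) + q₁ (m + 1) := by
    intro m hm; simp only [p₁, q₁]; split_ifs <;> omega
  have hstep₂ : ∀ m, m + 1 < 2 * k - 3 → p₂ m ≤ p₂ (m + 1) ∧ q₂ m ≤ q₂ (m + 1) ∧
      p₂ m + q₂ m < p₂ (m + 1) + q₂ (m + 1) := by
    intro m hm; simp only [p₂, q₂]; split_ifs <;> omega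
  have heq := eqOn_of_strictMonoOn_of_card_le (hpath hpq₁ hstep₁) (hpath hpq₂ hstep₂)
    (hmem hpq₁) (hmem hpq₂) (by omega) (show j < 2 * k - 3 by omega)
  simp only [p₁, q₁, p₂, q₂, if_pos hjk, if_neg (show ¬j < 2 by omega),
    if_pos (show j < k by omega)] at heq
  omega

def reflect (k : ℕ) (a : ℕ → ℤ) (n : ℕ) : ℤ := -a (k - 1 - n)

lemma strictMonoOn_reflect (ha : StrictMonoOn a (Set.Iio k)) :
    StrictMonoOn (reflect k a) (Set.Iio k) := by
  intro m hm n hn hmn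
  simp only [Set.mem_Iio] at hm hn
  simp only [reflect, neg_lt_neg_iff]
  exact ha (show k - 1 - n < k by omega) (show k - 1 - m < k by omega) (by omega)

lemma reflect_sub_reflect {i j : ℕ} (hij : i + j + 2 = k) :
    reflect k a (j + 1) - reflect k a j = a (i + 1) - a i := by
  simp only [reflect, show k - 1 - (j + 1) = i by omega, show k - 1 - j = i + 1 by omega]
  ring

lemma image_range_reflect :
    (range k).image (reflect k a) = ((range k).image a).image (negAddMonoidHom : ℤ →+ ℤ) := by
  ext z
  simp only [mem_image, mem_range, reflect, negAddMonoidHom_apply]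
  constructor
  · rintro ⟨n, hn, rfl⟩
    exact ⟨_, ⟨k - 1 - n, by omega, rfl⟩, rfl⟩
  · rintro ⟨_, ⟨n, hn, rfl⟩, rfl⟩
    exact ⟨k - 1 - n, by omega, by rw [Nat.sub_sub_self (by omega)]⟩

lemma card_restrictedSumset_reflect :
    #(restrictedSumset ((range k).image (reflect k a)) h) =
      #(restrictedSumset ((range k).image a) h) := by
  rw [image_range_reflect, restrictedSumset_image _ neg_injective]
  exact card_image_of_injective _ neg_injective

lemma sub_eq_of_card_restrictedSumset_two (ha : StrictMonoOn a (Set.Iio k)) (hk : 5 ≤ k)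
    (hcard : #(restrictedSumset ((range k).image a) 2) = 2 * (k - 2) + 1) {j : ℕ}
    (hj : j + 1 < k) : a (j + 1) - a j = a 1 - a 0 := by
  have hlow {j : ℕ} (hj2 : 2 ≤ j) (hjk : j + 1 < k) :=
    sub_eq_of_card_restrictedSumset_two_le ha hcard.le hj2 hjk
  have hhigh {j : ℕ} (hj2 : 2 ≤ j) (hjk : j + 1 < k) :=
    sub_eq_of_card_restrictedSumset_two_le (strictMonoOn_reflect ha)
      (card_restrictedSumset_reflect.trans hcard).le hj2 hjk
  by_cases hj2 : 2 ≤ j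
  · exact hlow hj2 hj
  · have hrefl := hhigh (j := k - 2 - j) (by omega) (by omega)
    rw [reflect_sub_reflect (i := j) (by omega),
      reflect_sub_reflect (i := k - 2) (j := 0) (by omega), hlow (j := k - 2) (by omega) (by omega)] at hrefl
    exact hrefl

lemma sub_eq_of_sub_eq_of_reflect (hk : 4 ≤ k)
    (hlow : ∀ j, j + 2 < k → a (j + 1) - a j = a 1 - a 0)
    (hhigh : ∀ j, j + 2 < k →
      reflect k a (j + 1) - reflect k a j = reflect k a 1 - reflect k a 0)
    {j : ℕ} (hj : j + 1 < k) : a (j + 1) - a j = a 1 - a 0 := by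
  by_cases hj2 : j + 2 < k
  · exact hlow j hj2
  · have hrefl := hhigh (k - 3) (by omega)
    rw [reflect_sub_reflect (i := 1) (by omega),
      reflect_sub_reflect (i := k - 2) (j := 0) (by omega), hlow 1 (by omega), show k - 2 = j by omega] at hrefl
    exact hrefl.symm

theorem sub_eq_of_card_restrictedSumset_eq (ha : StrictMonoOn a (Set.Iio k)) (hk : 5 ≤ k)
    (hh : 2 ≤ h) (hhk : h + 2 ≤ k)
    (hcard : #(restrictedSumset ((range k).image a) h) = h * (k - h) + 1) {j : ℕ}
    (hj : j + 1 < k) : a (j + 1) - a j = a 1 - a 0 := by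
  induction h using Nat.strong_induction_on generalizing k a j with
  | _ h ih =>
  obtain rfl | hh := hh.eq_or_lt
  · exact sub_eq_of_card_restrictedSumset_two ha hk hcard hj
  obtain rfl | hhk := hhk.eq_or_lt
  · have hA : #((range (h + 2)).image a) = h + 2 := by
      rw [card_image_of_injOn (ha.injOn.mono (by simp)), card_range]
    have hcompl := card_restrictedSumset_card_sub (A := (range (h + 2)).image a) (h := h) (by omega)
    rw [hA, Nat.add_sub_cancel_left] at hcompl
    rw [Nat.add_sub_cancel_left] at hcard
    exact ih 2 hh ha hk le_rfl (by omega) (by omega) hj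
  · obtain ⟨k, rfl⟩ : ∃ k', k = k' + 1 := ⟨k - 1, by omega⟩
    obtain ⟨h, rfl⟩ : ∃ h', h = h' + 1 := ⟨h - 1, by omega⟩
    rw [Nat.add_sub_add_right] at hcard
    have hb := strictMonoOn_reflect ha
    have hlow (j : ℕ) (hj : j + 2 < k + 1) :=
      ih h (by omega) (ha.mono (Set.Iio_subset_Iio k.le_succ)) (by omega) (by omega) (by omega)
        (card_restrictedSumset_eq_of_succ ha (by omega) hcard) (j := j) (by omega)
    have hhigh (j : ℕ) (hj : j + 2 < k + 1) :=
      ih h (by omega) (hb.mono (Set.Iio_subset_Iio k.le_succ)) (by omega) (by omega) (by omega)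
        (card_restrictedSumset_eq_of_succ hb (by omega)
          (card_restrictedSumset_reflect.trans hcard)) (j := j) (by omega)
    exact sub_eq_of_sub_eq_of_reflect (by omega) hlow hhigh hj

lemma isAPFinset_of_sub_eq (h01 : a 0 < a 1)
    (hd : ∀ j, j + 1 < k → a (j + 1) - a j = a 1 - a 0) :
    IsAPFinset ((range k).image a) k := by
  have hlin : ∀ j < k, a j = a 0 + j * (a 1 - a 0) := by
    intro j hj
    induction j with
    | zero => simp
    | succ j ih =>
      push_cast
      linarith [hd j hj, ih (by omega)]
  exact ⟨a 0, a 1 - a 0, sub_pos.2 h01, image_congr fun j hj => hlin j (by simpa using hj)⟩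

end Sequences

lemma exists_strictMonoOn_image_range_eq {α : Type*} [LinearOrder α] [Inhabited α]
    (A : Finset α) : ∃ a : ℕ → α, StrictMonoOn a (Set.Iio #A) ∧ (range #A).image a = A := by
  let e := A.orderEmbOfFin rfl
  refine ⟨fun n => if hn : n < #A then e ⟨n, hn⟩ else default, fun m hm n hn hmn => ?_, ?_⟩
  · simp only [dif_pos (Set.mem_Iio.1 hm), dif_pos (Set.mem_Iio.1 hn)]
    exact e.strictMono hmn
  · ext x
    simp only [mem_image, mem_range]
    constructor
    · rintro ⟨n, hn, rfl⟩
      simp only [dif_pos hn]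
      exact orderEmbOfFin_mem A rfl _
    · intro hx
      obtain ⟨i, rfl⟩ : x ∈ Set.range e := by rwa [range_orderEmbOfFin]
      exact ⟨i, i.2, by simp⟩

theorem restricted_sumset_eq_implies_AP (A : Finset ℤ) (k h : ℕ) (hk : A.card = k)
    (hk5 : 5 ≤ k) (hh2 : 2 ≤ h) (hhk : h ≤ k - 2)
    (hcard : ({z : ℤ | ∃ f : Fin h → ℤ, Function.Injective f ∧ (∀ i, f i ∈ A) ∧
        z = ∑ i, f i}.ncard : ℤ) = (h : ℤ) * k - (h : ℤ) ^ 2 + 1) :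
    IsAPFinset A k := by
  obtain ⟨a, ha, hA⟩ := exists_strictMonoOn_image_range_eq A
  rw [hk] at ha hA
  rw [← coe_restrictedSumset, Set.ncard_coe_finset, ← hA] at hcard
  have hcard' : #(restrictedSumset ((range k).image a) h) = h * (k - h) + 1 := by
    zify [show h ≤ k by omega]
    rw [hcard]
    ring
  rw [← hA]
  exact isAPFinset_of_sub_eq (ha (by simp; omega) (by simp; omega) zero_lt_one)
    fun j hj => sub_eq_of_card_restrictedSumset_eq ha hk5 hh2 (by omega) hcard' hj
end

section
/- Let A = {a_0 < a_1 < ... < a_{k−1}} be a set of k integers, r = (r_0,...,r_{k−1}) a k-tuple of positive integers, and h an integer with 2 ≤ h ≤ Σ r_j. Then |h^{(r)}A| ≥ L(r,h), where h^{(r)}A = {Σ s_i a_i : 0 ≤ s_i ≤ r_i, Σ s_i = h} and L(r,h) = Σ_{j=M+1}^{k−1} j·r_j − Σ_{j=0}^{I−1} j·r_j + M·θ − I·δ + 1, with I the largest integer such that Σ_{j=0}^{I−1} r_j ≤ h, M the least integer such that Σ_{j=M+1}^{k−1} r_j ≤ h, δ = h − Σ_{j=0}^{I−1} r_j, and θ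 = h − Σ_{j=M+1}^{k−1} r_j. -/
open Finset

/-- A step `U → W`: some coordinate `j` decreases by 1 and coordinate `j+1` increases by 1. -/
def IsStep (k : ℕ) (U W : ℕ → ℕ) : Prop :=
  ∃ j, j + 1 < k ∧ U j = W j + 1 ∧ W (j + 1) = U (j + 1) + 1 ∧
    ∀ i, i ≠ j → i ≠ j + 1 → W i = U i

/-- Membership in `R(r,h)`: a `k`-tuple of nonnegative integers with `x i ≤ r i` and `∑ x i = h`. -/
def InR (k : ℕ) (r : ℕ → ℕ) (h : ℕ) (x : ℕ → ℕ) : Prop :=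
  (∀ i < k, x i ≤ r i) ∧ (∀ i, k ≤ i → x i = 0) ∧ ∑ i ∈ Finset.range k, x i = h

/-- The general `h`-fold sumset `h^{(r)}A` for `A = {a 0 < a 1 < ⋯ < a (k-1)}`. -/
def genSumset (k : ℕ) (a : ℕ → ℤ) (r : ℕ → ℕ) (h : ℕ) : Set ℤ :=
  {z | ∃ s : ℕ → ℕ, (∀ i < k, s i ≤ r i) ∧ (∑ i ∈ Finset.range k, s i = h) ∧
    z = ∑ i ∈ Finset.range k, (s i : ℤ) * a i}

/-- The quantity `L(r,h)` in terms of `I`, `M`, `δ`, `θ`. -/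
def Lval (k I M : ℕ) (r : ℕ → ℕ) (δ θ : ℕ) : ℤ :=
  (∑ j ∈ Finset.Ico (M + 1) k, (j : ℤ) * r j) - (∑ j ∈ Finset.range I, (j : ℤ) * r j)
    + (M : ℤ) * θ - (I : ℤ) * δ + 1

/-- The weighted sum `S(X) = ∑ j·x j`. -/
def Sw (k : ℕ) (x : ℕ → ℕ) : ℤ := ∑ j ∈ Finset.range k, (j : ℤ) * x j

/-- An `(r,h)`-path of length `t`: `P 1 → P 2 → ⋯ → P t`, all in `R(r,h)`. -/
def IsPath (k : ℕ) (r : ℕ → ℕ) (h t : ℕ) (P : ℕ → ℕ → ℕ) : Prop :=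
  (∀ i, 1 ≤ i → i ≤ t → InR k r h (P i)) ∧
  (∀ i, 1 ≤ i → i < t → IsStep k (P i) (P (i + 1)))

/-! Give a multiplicity vector `x ∈ R(r,h)` the weight `Sw k x = ∑ j * x j`. A step moving one
unit from `j` to `j + 1` raises the weight by exactly one and, `a` being increasing, strictly raises
`∑ x j * a j`. The weight is the sum of the tails `∑_{j>t} x j ≤ min h (∑_{j>t} r j)`, with equality
for every `t` when no step is possible; so as long as the weight is below
`∑_t min h (∑_{j>t} r j) = Mθ + ∑_{j>M} j r j`, a step is available. Starting from the left-packed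
vector `(r 0, …, r (I-1), δ, 0, …)`, of weight `∑_{j<I} j r j + Iδ`, one can therefore walk through
`L(r,h)` vectors with strictly increasing sums, i.e. distinct elements of `h^{(r)}A`. -/

theorem Finset.sum_Ico_sum_Ico_succ_eq_sum_nsmul {M : Type*} [AddCommMonoid M] (f : ℕ → M)
    (m n : ℕ) : ∑ t ∈ Ico m n, ∑ j ∈ Ico (t + 1) n, f j = ∑ j ∈ Ico m n, (j - m) • f j := by
  simp only [sum_Ico_Ico_comm', sum_const, Nat.card_Ico]

theorem Set.le_ncard_image_of_exists_step {α β : Type*} [LinearOrder β] {P : α → Prop}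
    {f : α → β} {w : α → ℤ} {B : ℤ} (hfin : (f '' {x | P x}).Finite)
    (hstep : ∀ x, P x → w x < B → ∃ y, P y ∧ w y = w x + 1 ∧ f x < f y) {x : α} (hx : P x) :
    B - w x + 1 ≤ (f '' {x | P x}).ncard := by
  set S := f '' {x | P x}
  suffices key : ∀ n : ℕ, ∀ x, P x → w x + n ≤ B → n + 1 ≤ (S ∩ Set.Ici (f x)).ncard by
    have hle := Set.ncard_le_ncard Set.inter_subset_left hfin (t := S) (s := S ∩ Set.Ici (f x))
    rcases lt_or_ge B (w x) with hB | hB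
    · omega
    · have := key (B - w x).toNat x hx (by omega)
      omega
  intro n
  induction n with
  | zero =>
    intro x hx _
    exact (Set.ncard_pos (hfin.subset Set.inter_subset_left)).2 ⟨f x, ⟨x, hx, rfl⟩, le_rfl⟩
  | succ n ih =>
    intro x hx hxB
    obtain ⟨y, hy, hwy, hfxy⟩ := hstep x hx (by omega)
    have hnot : f x ∉ S ∩ Set.Ici (f y) := fun h => hfxy.not_ge h.2
    have hsub : insert (f x) (S ∩ Set.Ici (f y)) ⊆ S ∩ Set.Ici (f x) :=
      Set.insert_subset ⟨⟨x, hx, rfl⟩, le_rfl⟩ fun z hz => ⟨hz.1, hfxy.le.trans hz.2⟩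
    calc n + 1 + 1 ≤ (S ∩ Set.Ici (f y)).ncard + 1 := by gcongr; exact ih y hy (by omega)
      _ = (insert (f x) (S ∩ Set.Ici (f y))).ncard :=
        (Set.ncard_insert_of_notMem hnot (hfin.subset Set.inter_subset_left)).symm
      _ ≤ (S ∩ Set.Ici (f x)).ncard := Set.ncard_le_ncard hsub (hfin.subset Set.inter_subset_left)

def tailSum (k : ℕ) (x : ℕ → ℕ) (t : ℕ) : ℕ := ∑ j ∈ Ico (t + 1) k, x j

def maxWeight (k h : ℕ) (r : ℕ → ℕ) : ℕ := ∑ t ∈ range k, min h (tailSum k r t)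

theorem Sw_eq_sum_tailSum (k : ℕ) (x : ℕ → ℕ) : Sw k x = ∑ t ∈ range k, (tailSum k x t : ℤ) := by
  simp only [Sw, tailSum, Nat.cast_sum, range_eq_Ico, sum_Ico_sum_Ico_succ_eq_sum_nsmul,
    Nat.sub_zero, nsmul_eq_mul]

section Configurations

variable {k h : ℕ} {r x y : ℕ → ℕ}

theorem InR.tailSum_le (hx : InR k r h x) (t : ℕ) : tailSum k x t ≤ min h (tailSum k r t) := by
  refine le_min ?_ (sum_le_sum fun j hj => hx.1 j (mem_Ico.1 hj).2)
  rw [← hx.2.2, range_eq_Ico]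
  exact sum_le_sum_of_subset (Ico_subset_Ico (Nat.zero_le _) le_rfl)

theorem InR.eq_of_stuck (hr : ∀ j < k, 0 < r j) (hx : InR k r h x)
    (hstuck : ∀ j, j + 1 < k → 0 < x j → r (j + 1) ≤ x (j + 1)) {j i : ℕ}
    (hxj : 0 < x j) (hji : j < i) (hik : i < k) : x i = r i := by
  induction i, hji using Nat.le_induction with
  | base => exact le_antisymm (hx.1 _ hik) (hstuck j hik hxj)
  | succ i hji ih =>
    have hxi : 0 < x i := (ih (by omega)).symm ▸ hr i (by omega)
    exact le_antisymm (hx.1 _ hik) (hstuck i hik hxi)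

theorem InR.tailSum_eq_min_of_stuck (hr : ∀ j < k, 0 < r j) (hx : InR k r h x)
    (hstuck : ∀ j, j + 1 < k → 0 < x j → r (j + 1) ≤ x (j + 1)) {t : ℕ} (ht : t < k) :
    tailSum k x t = min h (tailSum k r t) := by
  have hle := hx.tailSum_le t
  by_cases hhead : ∃ j ≤ t, 0 < x j
  · obtain ⟨j, hjt, hxj⟩ := hhead
    have htail : tailSum k x t = tailSum k r t := sum_congr rfl fun i hi =>
      hx.eq_of_stuck hr hstuck hxj (by simp only [mem_Ico] at hi; omega) (mem_Ico.1 hi).2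
    omega
  · push Not at hhead
    have htail : tailSum k x t = h := by
      rw [← hx.2.2, ← sum_range_add_sum_Ico _ (show t + 1 ≤ k by omega),
        sum_eq_zero fun j hj => by have := hhead j (by simp only [mem_range] at hj; omega); omega,
        zero_add, tailSum]
    omega

theorem InR.Sw_eq_maxWeight_of_stuck (hr : ∀ j < k, 0 < r j) (hx : InR k r h x)
    (hstuck : ∀ j, j + 1 < k → 0 < x j → r (j + 1) ≤ x (j + 1)) :
    Sw k x = maxWeight k h r := by
  rw [Sw_eq_sum_tailSum, maxWeight, Nat.cast_sum]
  exact sum_congr rfl fun t ht => by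
    rw [hx.tailSum_eq_min_of_stuck hr hstuck (mem_range.1 ht)]

theorem IsStep.exists_sum_mul_eq (hxy : IsStep k x y) (f : ℕ → ℤ) :
    ∃ j, j + 1 < k ∧
      ∑ i ∈ range k, (y i : ℤ) * f i = ∑ i ∈ range k, (x i : ℤ) * f i + (f (j + 1) - f j) := by
  obtain ⟨j, hjk, hxj, hyj, hother⟩ := hxy
  refine ⟨j, hjk, ?_⟩
  rw [← sub_eq_iff_eq_add', ← sum_sub_distrib, sum_eq_add_of_mem j (j + 1)
    (mem_range.2 (by omega)) (mem_range.2 hjk) (by omega)]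
  · rw [hxj, hyj]
    push_cast
    ring
  · rintro i - ⟨hij, hij'⟩
    rw [hother i hij hij', sub_self]

theorem IsStep.sum_eq (hxy : IsStep k x y) : ∑ i ∈ range k, y i = ∑ i ∈ range k, x i := by
  obtain ⟨j, -, hsum⟩ := hxy.exists_sum_mul_eq 1
  simp only [Pi.one_apply, mul_one, sub_self, add_zero] at hsum
  exact_mod_cast hsum

theorem IsStep.Sw_eq (hxy : IsStep k x y) : Sw k y = Sw k x + 1 := by
  obtain ⟨j, -, hsum⟩ := hxy.exists_sum_mul_eq Nat.cast
  have hSw : ∀ z, Sw k z = ∑ i ∈ range k, (z i : ℤ) * i := fun z =>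
    sum_congr rfl fun i _ => mul_comm _ _
  rw [hSw, hSw, hsum]
  push_cast
  ring

theorem IsStep.sum_mul_lt {a : ℕ → ℤ} (ha : ∀ i j, i < j → j < k → a i < a j)
    (hxy : IsStep k x y) : ∑ i ∈ range k, (x i : ℤ) * a i < ∑ i ∈ range k, (y i : ℤ) * a i := by
  obtain ⟨j, hjk, hsum⟩ := hxy.exists_sum_mul_eq a
  linarith [ha j (j + 1) j.lt_succ_self hjk]

theorem InR.exists_step (hx : InR k r h x) {j : ℕ} (hjk : j + 1 < k) (hxj : 0 < x j)
    (hxr : x (j + 1) < r (j + 1)) : ∃ y, IsStep k x y ∧ InR k r h y := by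
  set y := Function.update (Function.update x j (x j - 1)) (j + 1) (x (j + 1) + 1)
  have hxy : IsStep k x y := by
    refine ⟨j, hjk, ?_, by simp [y], fun i hi hi' => by simp [y, hi, hi']⟩
    simp only [y, Function.update_of_ne (Nat.succ_ne_self j).symm, Function.update_self]
    omega
  refine ⟨y, hxy, fun i hi => ?_, fun i hi => ?_, hxy.sum_eq ▸ hx.2.2⟩
  · have := hx.1 i hi
    simp only [y, Function.update_apply]
    split_ifs <;> subst_vars <;> omega
  · simp [y, show i ≠ j by omega, show i ≠ j + 1 by omega, hx.2.1 i hi]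

theorem InR.exists_step_of_Sw_lt (hr : ∀ j < k, 0 < r j) (hx : InR k r h x)
    (hlt : Sw k x < maxWeight k h r) : ∃ y, IsStep k x y ∧ InR k r h y := by
  by_cases hmove : ∃ j, j + 1 < k ∧ 0 < x j ∧ x (j + 1) < r (j + 1)
  · obtain ⟨j, hjk, hxj, hxr⟩ := hmove
    exact hx.exists_step hjk hxj hxr
  · push Not at hmove
    exact absurd (hx.Sw_eq_maxWeight_of_stuck hr hmove) hlt.ne

theorem maxWeight_eq {M θ : ℕ} (hM1 : ∑ j ∈ Ico (M + 1) k, r j ≤ h)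
    (hM2 : ∀ M', (∑ j ∈ Ico (M' + 1) k, r j ≤ h) → M ≤ M')
    (hθ : (θ : ℤ) = (h : ℤ) - ∑ j ∈ Ico (M + 1) k, (r j : ℤ)) :
    (maxWeight k h r : ℤ) = M * θ + ∑ j ∈ Ico (M + 1) k, (j : ℤ) * r j := by
  have hMk : M ≤ k := hM2 k (by simp)
  have hlow : ∑ t ∈ range M, min h (tailSum k r t) = M * h := by
    rw [sum_congr rfl fun t ht => min_eq_left (le_of_not_ge fun hle : tailSum k r t ≤ h =>
      (hM2 t hle).not_gt (mem_range.1 ht)), sum_const, card_range, smul_eq_mul]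
  have hhigh : ∑ t ∈ Ico M k, min h (tailSum k r t) = ∑ t ∈ Ico M k, tailSum k r t :=
    sum_congr rfl fun t ht => min_eq_right <| (sum_le_sum_of_subset <|
      Ico_subset_Ico (by simp only [mem_Ico] at ht; omega) le_rfl).trans hM1
  have htail : ∑ t ∈ Ico M k, (tailSum k r t : ℤ) =
      ∑ j ∈ Ico (M + 1) k, (j : ℤ) * r j - M * ∑ j ∈ Ico (M + 1) k, (r j : ℤ) := by
    simp only [tailSum, Nat.cast_sum, sum_Ico_sum_Ico_succ_eq_sum_nsmul, nsmul_eq_mul, mul_sum,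
      ← sum_sub_distrib]
    rcases hMk.lt_or_eq with hlt | rfl
    · rw [sum_eq_sum_Ico_succ_bot hlt, Nat.sub_self, Nat.cast_zero, zero_mul, zero_add]
      exact sum_congr rfl fun j hj => by
        rw [Nat.cast_sub (by simp only [mem_Ico] at hj; omega)]
        ring
    · simp
  rw [maxWeight, ← sum_range_add_sum_Ico _ hMk, hlow, hhigh]
  push_cast
  rw [htail, hθ]
  ring

def leftPacked (r : ℕ → ℕ) (I δ : ℕ) (j : ℕ) : ℕ := if j < I then r j else if j = I then δ else 0

theorem sum_mul_leftPacked {I δ : ℕ} (hIk : I ≤ k) (hδ : I = k → δ = 0) (f : ℕ → ℤ) :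
    ∑ j ∈ range k, f j * leftPacked r I δ j = ∑ j ∈ range I, f j * r j + f I * δ := by
  have hhead : ∑ j ∈ range I, f j * leftPacked r I δ j = ∑ j ∈ range I, f j * r j :=
    sum_congr rfl fun j hj => by rw [leftPacked, if_pos (mem_range.1 hj)]
  rcases hIk.lt_or_eq with hlt | rfl
  · have htail : ∑ j ∈ Ico (I + 1) k, f j * leftPacked r I δ j = 0 := sum_eq_zero fun j hj => by
      simp only [mem_Ico] at hj
      simp [leftPacked, show ¬j < I by omega, show j ≠ I by omega]
    rw [← sum_range_add_sum_Ico _ hlt, sum_range_succ, hhead, htail, add_zero]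
    simp [leftPacked]
  · rw [hhead, hδ rfl, Nat.cast_zero, mul_zero, add_zero]

theorem inR_leftPacked {I δ : ℕ} (hIk : I ≤ k) (hδk : I = k → δ = 0)
    (hI : ∀ I' ≤ k, ∑ j ∈ range I', r j ≤ h → I' ≤ I) (hδ : δ + ∑ j ∈ range I, r j = h) :
    InR k r h (leftPacked r I δ) := by
  refine ⟨fun j hj => ?_, fun j hj => ?_, ?_⟩
  · unfold leftPacked
    split_ifs with hjI hjI'
    · exact le_rfl
    · subst hjI'
      by_contra hδr
      have := hI (j + 1) hj (by rw [sum_range_succ]; omega)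
      omega
    · exact Nat.zero_le _
  · simp only [leftPacked, if_neg (show ¬j < I by omega)]
    split_ifs with hjI
    · exact hδk (by omega)
    · rfl
  · have := sum_mul_leftPacked (r := r) hIk hδk 1
    simp only [Pi.one_apply, one_mul, ← Nat.cast_sum] at this
    omega

end Configurations

theorem genSumset_finite (k : ℕ) (a : ℕ → ℤ) (r : ℕ → ℕ) (h : ℕ) :
    (genSumset k a r h).Finite := by
  refine (Set.finite_Icc (-∑ i ∈ range k, r i * |a i|) (∑ i ∈ range k, r i * |a i|)).subset ?_
  rintro _ ⟨s, hs, -, rfl⟩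
  rw [Set.mem_Icc, ← abs_le]
  refine (abs_sum_le_sum_abs _ _).trans (sum_le_sum fun i hi => ?_)
  rw [abs_mul, Nat.abs_cast]
  exact mul_le_mul_of_nonneg_right (by exact_mod_cast hs i (mem_range.1 hi)) (abs_nonneg _)

theorem general_hfold_lower_bound_general (k h I M δ θ : ℕ) (a : ℕ → ℤ) (r : ℕ → ℕ)
    (ha : ∀ i j, i < j → j < k → a i < a j)
    (hr : ∀ j < k, 0 < r j)
    (hhk : h ≤ ∑ j ∈ Finset.range k, r j)
    (hIk : I ≤ k)
    (hI2 : ∀ I' ≤ k, (∑ j ∈ Finset.range I', r j ≤ h) → I' ≤ I)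
    (hM1 : ∑ j ∈ Finset.Ico (M + 1) k, r j ≤ h)
    (hM2 : ∀ M', (∑ j ∈ Finset.Ico (M' + 1) k, r j ≤ h) → M ≤ M')
    (hδ : (δ : ℤ) = (h : ℤ) - ∑ j ∈ Finset.range I, (r j : ℤ))
    (hθ : (θ : ℤ) = (h : ℤ) - ∑ j ∈ Finset.Ico (M + 1) k, (r j : ℤ)) :
    Lval k I M r δ θ ≤ ((genSumset k a r h).ncard : ℤ) := by
  have hδh : δ + ∑ j ∈ range I, r j = h := by
    rw [← Nat.cast_sum] at hδ
    omega
  have hδk : I = k → δ = 0 := by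
    rintro rfl
    omega
  set value : (ℕ → ℕ) → ℤ := fun x => ∑ i ∈ range k, (x i : ℤ) * a i
  have himage : value '' {x | InR k r h x} ⊆ genSumset k a r h :=
    fun _ ⟨x, hx, hz⟩ => ⟨x, hx.1, hx.2.2, hz.symm⟩
  have hfin := genSumset_finite k a r h
  have hchain := Set.le_ncard_image_of_exists_step (hfin.subset himage)
    (fun x hx hlt => (hx.exists_step_of_Sw_lt hr hlt).imp
      fun y ⟨hxy, hy⟩ => ⟨hy, hxy.Sw_eq, hxy.sum_mul_lt ha⟩)
    (inR_leftPacked hIk hδk hI2 hδh)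
  calc Lval k I M r δ θ = maxWeight k h r - Sw k (leftPacked r I δ) + 1 := by
        rw [maxWeight_eq hM1 hM2 hθ, Sw, sum_mul_leftPacked hIk hδk, Lval]
        ring
    _ ≤ (value '' {x | InR k r h x}).ncard := hchain
    _ ≤ (genSumset k a r h).ncard := by exact_mod_cast Set.ncard_le_ncard himage hfin

theorem general_hfold_lower_bound (k h I M δ θ : ℕ) (a : ℕ → ℤ) (r : ℕ → ℕ)
    (ha : ∀ i j, i < j → j < k → a i < a j)
    (hr : ∀ j < k, 0 < r j)
    (hh2 : 2 ≤ h) (hhk : h ≤ ∑ j ∈ Finset.range k, r j)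
    (hIk : I ≤ k)
    (hI1 : ∑ j ∈ Finset.range I, r j ≤ h)
    (hI2 : ∀ I' ≤ k, (∑ j ∈ Finset.range I', r j ≤ h) → I' ≤ I)
    (hM1 : ∑ j ∈ Finset.Ico (M + 1) k, r j ≤ h)
    (hM2 : ∀ M', (∑ j ∈ Finset.Ico (M' + 1) k, r j ≤ h) → M ≤ M')
    (hδ : (δ : ℤ) = (h : ℤ) - ∑ j ∈ Finset.range I, (r j : ℤ))
    (hθ : (θ : ℤ) = (h : ℤ) - ∑ j ∈ Finset.Ico (M + 1) k, (r j : ℤ)) :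
    Lval k I M r δ θ ≤ ((genSumset k a r h).ncard : ℤ) :=
  general_hfold_lower_bound_general k h I M δ θ a r ha hr hhk hIk hI2 hM1 hM2 hδ hθ
end

section
/- Let A = {0, 1, ..., k−1}, r = (r_0,...,r_{k−1}) a k-tuple of positive integers, and h an integer with 2 ≤ h ≤ Σ r_j. Then |h^{(r)}A| = L(r,h), i.e., the lower bound L(r,h) for general h-fold sumsets is attained. -/
open Finset

/-!
Identify `h^{(r)}A` with the set of values of `Sw` on `R(r,h)`. Moving mass from indices below
some `c` to indices above `c` never decreases `Sw`, since `Sw y - Sw x = ∑ (i - c) (y i - x i)`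
when the total masses agree. Hence filling the lowest capacities greedily (`r 0, …, r (I-1)`,
then `δ` at `I`) minimises `Sw`, and filling the highest ones maximises it; these extremes are the
two halves of `L(r,h)`. Between them every integer is attained: a configuration admitting no step
`x j ↦ x j - 1, x (j+1) ↦ x (j+1) + 1` inside the capacities is zero before its first nonzero
entry and full after it, so it is maximal, and a step raises `Sw` by exactly one.
-/

section
variable {k h : ℕ} {r : ℕ → ℕ}

theorem genSumset_eq_image_Sw :
    genSumset k (fun i => (i : ℤ)) r h = Sw k '' {x | InR k r h x} := by
  ext z
  constructor
  · rintro ⟨s, hs, hsum, rfl⟩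
    refine ⟨fun i => if i < k then s i else 0, ⟨fun i hi => ?_, fun i hi => ?_, ?_⟩, ?_⟩
    · simpa [hi] using hs i hi
    · simp only [ite_eq_right_iff]
      omega
    · rw [← hsum]
      exact sum_congr rfl fun i hi => if_pos (mem_range.mp hi)
    · exact sum_congr rfl fun i hi => by simp [mem_range.mp hi, mul_comm]
  · rintro ⟨x, ⟨hxr, -, hsum⟩, rfl⟩
    exact ⟨x, hxr, hsum, sum_congr rfl fun i _ => mul_comm _ _⟩

theorem Sw_le_Sw_of_shift {x y : ℕ → ℕ} (c : ℕ)
    (hsum : ∑ i ∈ range k, x i = ∑ i ∈ range k, y i)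
    (hlo : ∀ i < c, y i ≤ x i) (hhi : ∀ i, c < i → i < k → x i ≤ y i) :
    Sw k x ≤ Sw k y := by
  have hsumZ : ∑ i ∈ range k, (x i : ℤ) = ∑ i ∈ range k, (y i : ℤ) := by exact_mod_cast hsum
  have hdiff : Sw k y - Sw k x = ∑ i ∈ range k, ((i : ℤ) - c) * ((y i : ℤ) - x i) := by
    simp only [Sw, mul_sub, sub_mul, sum_sub_distrib, ← mul_sum, hsumZ]
    ring
  have hnonneg : 0 ≤ ∑ i ∈ range k, ((i : ℤ) - c) * ((y i : ℤ) - x i) := by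
    refine sum_nonneg fun i hi => ?_
    rcases lt_trichotomy i c with hic | rfl | hci
    · have := hlo i hic
      exact mul_nonneg_of_nonpos_of_nonpos (by omega) (by omega)
    · simp
    · have := hhi i hci (mem_range.mp hi)
      exact mul_nonneg (by omega) (by omega)
  linarith

theorem Sw_le_Sw_of_no_step (hr : ∀ j < k, 0 < r j) {x y : ℕ → ℕ}
    (hx : InR k r h x) (hy : InR k r h y)
    (hstuck : ∀ j, j + 1 < k → x j = 0 ∨ x (j + 1) = r (j + 1)) :
    Sw k y ≤ Sw k x := by
  obtain ⟨c, hc, hzero⟩ : ∃ c, (k ≤ c ∨ x c ≠ 0) ∧ ∀ i < c, x i = 0 :=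
    have hex : ∃ c, k ≤ c ∨ x c ≠ 0 := ⟨k, Or.inl le_rfl⟩
    ⟨Nat.find hex, Nat.find_spec hex, fun i hi => of_not_not (not_or.mp (Nat.find_min hex hi)).2⟩
  have hfull : ∀ i, c < i → i < k → x i = r i := by
    intro i (hci : c + 1 ≤ i)
    induction i, hci using Nat.le_induction with
    | base =>
      intro hk
      have hstuck_c := hstuck c hk
      omega
    | succ i hci ih =>
      intro hk
      have hxi := ih (by omega)
      have hri := hr i (by omega)
      have hstuck_i := hstuck i hk
      omega
  exact Sw_le_Sw_of_shift c (hy.2.2.trans hx.2.2.symm)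
    (fun i hi => (hzero i hi).trans_le (Nat.zero_le _))
    (fun i hci hik => (hy.1 i hik).trans_eq (hfull i hci hik).symm)

theorem exists_inR_Sw_eq_add_one {x : ℕ → ℕ} (hx : InR k r h x) {j : ℕ} (hj : j + 1 < k)
    (hxj : x j ≠ 0) (hxj1 : x (j + 1) < r (j + 1)) :
    ∃ x', InR k r h x' ∧ Sw k x' = Sw k x + 1 := by
  set x' : ℕ → ℕ := fun i => x i + (if i = j + 1 then 1 else 0) - (if i = j then 1 else 0)
  have hx' : ∀ i, (x' i : ℤ) = x i + (if i = j + 1 then 1 else 0) - (if i = j then 1 else 0) := by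
    intro i
    simp only [x']
    split_ifs <;> subst_vars <;> omega
  have hjk : j ∈ range k := mem_range.mpr (by omega)
  have hj1k : j + 1 ∈ range k := mem_range.mpr hj
  refine ⟨x', ⟨fun i hi => ?_, fun i hi => ?_, ?_⟩, ?_⟩
  · have := hx.1 i hi
    zify
    rw [hx' i]
    split_ifs <;> subst_vars <;> omega
  · have := hx.2.1 i hi
    zify
    rw [hx' i]
    split_ifs <;> subst_vars <;> omega
  · have hsum : ∑ i ∈ range k, (x' i : ℤ) = ∑ i ∈ range k, (x i : ℤ) := by
      simp only [hx', sum_sub_distrib, sum_add_distrib, sum_ite_eq', hjk, hj1k, if_true]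
      ring
    rw [← hx.2.2]
    exact_mod_cast hsum
  · simp only [Sw, hx', mul_sub, mul_add, sum_sub_distrib, sum_add_distrib, mul_ite, mul_one,
      mul_zero, sum_ite_eq', hjk, hj1k, if_true]
    push_cast
    ring

theorem exists_inR_Sw_eq (hr : ∀ j < k, 0 < r j) {x₀ y : ℕ → ℕ}
    (hx₀ : InR k r h x₀) (hy : InR k r h y) {z : ℤ} (hz₀ : Sw k x₀ ≤ z) (hzy : z ≤ Sw k y) :
    ∃ x, InR k r h x ∧ Sw k x = z := by
  induction z, hz₀ using Int.leInduction with
  | base => exact ⟨x₀, hx₀, rfl⟩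
  | succ z _ ih =>
    obtain ⟨x, hx, rfl⟩ := ih (by omega)
    by_cases hstuck : ∀ j, j + 1 < k → x j = 0 ∨ x (j + 1) = r (j + 1)
    · have := Sw_le_Sw_of_no_step hr hx hy hstuck
      omega
    · push Not at hstuck
      obtain ⟨j, hj, hxj, hxj1⟩ := hstuck
      exact exists_inR_Sw_eq_add_one hx hj hxj ((hx.1 _ hj).lt_of_ne hxj1)

theorem image_Sw_eq_Icc (hr : ∀ j < k, 0 < r j) {a b : ℤ}
    (ha : IsLeast (Sw k '' {x | InR k r h x}) a) (hb : IsGreatest (Sw k '' {x | InR k r h x}) b) :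
    Sw k '' {x | InR k r h x} = Set.Icc a b := by
  refine Set.Subset.antisymm (fun z hz => ⟨ha.2 hz, hb.2 hz⟩) fun z hz => ?_
  obtain ⟨x₀, hx₀, rfl⟩ := ha.1
  obtain ⟨y, hy, rfl⟩ := hb.1
  exact exists_inR_Sw_eq hr hx₀ hy hz.1 hz.2

def lowConfig (r : ℕ → ℕ) (I δ : ℕ) (i : ℕ) : ℕ :=
  if i < I then r i else if i = I then δ else 0

def highConfig (k : ℕ) (r : ℕ → ℕ) (M θ : ℕ) (i : ℕ) : ℕ :=
  if i < M then 0 else if i = M then θ else if i < k then r i else 0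

theorem sum_mul_lowConfig (f : ℕ → ℤ) {I δ : ℕ} (hIk : I ≤ k) (hδ : I = k → δ = 0) :
    ∑ i ∈ range k, f i * lowConfig r I δ i = ∑ i ∈ range I, f i * r i + f I * δ := by
  rw [← sum_range_add_sum_Ico _ hIk]
  congr 1
  · exact sum_congr rfl fun i hi => by simp [lowConfig, mem_range.mp hi]
  · rcases hIk.lt_or_eq with hlt | rfl
    · rw [sum_eq_sum_Ico_succ_bot hlt, sum_eq_zero fun i hi => ?_]
      · simp [lowConfig]
      · have := (mem_Ico.mp hi).1
        simp [lowConfig, show ¬i < I by omega, show i ≠ I by omega]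
    · simp [hδ rfl]

theorem sum_mul_highConfig (f : ℕ → ℤ) {M θ : ℕ} (hMk : M < k) :
    ∑ i ∈ range k, f i * highConfig k r M θ i = ∑ i ∈ Ico (M + 1) k, f i * r i + f M * θ := by
  rw [range_eq_Ico, ← sum_Ico_consecutive _ (Nat.zero_le M) hMk.le,
    sum_eq_sum_Ico_succ_bot hMk, sum_eq_zero fun i hi => ?_]
  · simp only [highConfig, lt_irrefl, if_false, if_true, zero_add]
    rw [add_comm]
    congr 1
    refine sum_congr rfl fun i hi => ?_
    obtain ⟨hi1, hi2⟩ := mem_Ico.mp hi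
    simp [show ¬i < M by omega, show i ≠ M by omega, hi2]
  · simp [highConfig, (mem_Ico.mp hi).2]

theorem isLeast_image_Sw {I δ : ℕ} (hIk : I ≤ k) (hδr : I < k → δ ≤ r I)
    (hsum : ∑ i ∈ range I, r i + δ = h) (hhk : h ≤ ∑ i ∈ range k, r i) :
    IsLeast (Sw k '' {x | InR k r h x}) (∑ i ∈ range I, (i : ℤ) * r i + I * δ) := by
  have hδ : I = k → δ = 0 := by
    rintro rfl
    omega
  have hlow : InR k r h (lowConfig r I δ) := by
    refine ⟨fun i hi => ?_, fun i hi => ?_, ?_⟩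
    · unfold lowConfig
      split_ifs with h1 h2
      · exact le_rfl
      · exact h2 ▸ hδr (h2 ▸ hi)
      · exact Nat.zero_le _
    · simp only [lowConfig]
      split_ifs <;> omega
    · have hsumZ := sum_mul_lowConfig (r := r) (fun _ => 1) hIk hδ
      simp only [one_mul] at hsumZ
      have : ∑ i ∈ range k, (lowConfig r I δ i : ℤ) = h := hsumZ.trans (by exact_mod_cast hsum)
      exact_mod_cast this
  refine ⟨⟨lowConfig r I δ, hlow, sum_mul_lowConfig _ hIk hδ⟩, ?_⟩
  rintro _ ⟨x, hx, rfl⟩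
  rw [← sum_mul_lowConfig (fun i => (i : ℤ)) hIk hδ]
  refine Sw_le_Sw_of_shift I (hlow.2.2.trans hx.2.2.symm) (fun i hi => ?_) fun i hi _ => ?_
  · simpa [lowConfig, hi] using hx.1 i (by omega)
  · simp [lowConfig, show ¬i < I by omega, show i ≠ I by omega]

theorem isGreatest_image_Sw {M θ : ℕ} (hMk : M < k) (hθr : θ ≤ r M)
    (hsum : ∑ i ∈ Ico (M + 1) k, r i + θ = h) :
    IsGreatest (Sw k '' {x | InR k r h x}) (∑ i ∈ Ico (M + 1) k, (i : ℤ) * r i + M * θ) := by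
  have hhigh : InR k r h (highConfig k r M θ) := by
    refine ⟨fun i hi => ?_, fun i hi => ?_, ?_⟩
    · unfold highConfig
      split_ifs with h1 h2
      · exact Nat.zero_le _
      · exact h2 ▸ hθr
      · exact le_rfl
    · simp only [highConfig]
      split_ifs <;> omega
    · have hsumZ := sum_mul_highConfig (r := r) (θ := θ) (fun _ => 1) hMk
      simp only [one_mul] at hsumZ
      have : ∑ i ∈ range k, (highConfig k r M θ i : ℤ) = h := hsumZ.trans (by exact_mod_cast hsum)
      exact_mod_cast this
  refine ⟨⟨highConfig k r M θ, hhigh, sum_mul_highConfig _ hMk⟩, ?_⟩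
  rintro _ ⟨x, hx, rfl⟩
  rw [← sum_mul_highConfig (fun i => (i : ℤ)) hMk]
  refine Sw_le_Sw_of_shift M (hx.2.2.trans hhigh.2.2.symm) (fun i hi => ?_) fun i hi hik => ?_
  · simp [highConfig, hi]
  · simpa [highConfig, show ¬i < M by omega, show i ≠ M by omega, hik] using hx.1 i hik

theorem le_sum_Ico_of_minimal {M : ℕ} (hhk : h ≤ ∑ j ∈ range k, r j)
    (hM : ∀ M', ∑ j ∈ Ico (M' + 1) k, r j ≤ h → M ≤ M') :
    h ≤ ∑ j ∈ Ico M k, r j := by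
  rcases Nat.eq_zero_or_pos M with rfl | hM0
  · rwa [range_eq_Ico] at hhk
  · by_contra hlt
    have := hM (M - 1) (by rw [Nat.sub_add_cancel hM0]; omega)
    omega

end

theorem general_hfold_lower_bound_attained_general (k h I M δ θ : ℕ) (r : ℕ → ℕ)
    (hr : ∀ j < k, 0 < r j)
    (hh2 : 2 ≤ h) (hhk : h ≤ ∑ j ∈ Finset.range k, r j)
    (hIk : I ≤ k)
    (hI2 : ∀ I' ≤ k, (∑ j ∈ Finset.range I', r j ≤ h) → I' ≤ I)
    (hM2 : ∀ M', (∑ j ∈ Finset.Ico (M' + 1) k, r j ≤ h) → M ≤ M')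
    (hδ : (δ : ℤ) = (h : ℤ) - ∑ j ∈ Finset.range I, (r j : ℤ))
    (hθ : (θ : ℤ) = (h : ℤ) - ∑ j ∈ Finset.Ico (M + 1) k, (r j : ℤ)) :
    ((genSumset k (fun i => (i : ℤ)) r h).ncard : ℤ) = Lval k I M r δ θ := by
  have hk : 0 < k := by
    by_contra! hk
    simp [Nat.le_zero.mp hk] at hhk
    omega
  have hδsum : ∑ j ∈ range I, r j + δ = h := by
    have := Nat.cast_sum (R := ℤ) (range I) r
    omega
  have hθsum : ∑ j ∈ Ico (M + 1) k, r j + θ = h := by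
    have := Nat.cast_sum (R := ℤ) (Ico (M + 1) k) r
    omega
  have hδr : I < k → δ ≤ r I := fun hIlt => by
    have := hI2 (I + 1) hIlt
    rw [sum_range_succ] at this
    omega
  have hMk : M < k := by
    have := hM2 (k - 1) (by simp [Nat.sub_add_cancel hk])
    omega
  have hθr : θ ≤ r M := by
    have hle := le_sum_Ico_of_minimal hhk hM2
    rw [sum_eq_sum_Ico_succ_bot hMk] at hle
    omega
  have hlow := isLeast_image_Sw hIk hδr hδsum hhk
  have hhigh := isGreatest_image_Sw hMk hθr hθsum
  rw [genSumset_eq_image_Sw, image_Sw_eq_Icc hr hlow hhigh, ← coe_Icc, Set.ncard_coe_finset,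
    Int.card_Icc, Int.toNat_of_nonneg (by linarith [hlow.2 hhigh.1]), Lval]
  ring

theorem general_hfold_lower_bound_attained (k h I M δ θ : ℕ) (r : ℕ → ℕ)
    (hr : ∀ j < k, 0 < r j)
    (hh2 : 2 ≤ h) (hhk : h ≤ ∑ j ∈ Finset.range k, r j)
    (hIk : I ≤ k)
    (hI1 : ∑ j ∈ Finset.range I, r j ≤ h)
    (hI2 : ∀ I' ≤ k, (∑ j ∈ Finset.range I', r j ≤ h) → I' ≤ I)
    (hM1 : ∑ j ∈ Finset.Ico (M + 1) k, r j ≤ h)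
    (hM2 : ∀ M', (∑ j ∈ Finset.Ico (M' + 1) k, r j ≤ h) → M ≤ M')
    (hδ : (δ : ℤ) = (h : ℤ) - ∑ j ∈ Finset.range I, (r j : ℤ))
    (hθ : (θ : ℤ) = (h : ℤ) - ∑ j ∈ Finset.Ico (M + 1) k, (r j : ℤ)) :
    ((genSumset k (fun i => (i : ℤ)) r h).ncard : ℤ) = Lval k I M r δ θ :=
  general_hfold_lower_bound_attained_general k h I M δ θ r hr hh2 hhk hIk hI2 hM2 hδ hθ
end

section
/- Let k ≥ 5, r = (r_0,...,r_{k−1}) a k-tuple of positive integers, and h an integer with 2 ≤ h ≤ Σ r_j − 2. If A is a set of k integers, then |h^{(r)}A| = L(r,h) if and only if A is a k-term arithmetic progression. -/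
open Finset

/-! Order `R(r,h)` by the weight `S(x) = ∑ j x_j`. A tuple admitting no move of one unit from
some `j` to `j+1` is packed to the top, and tail-sum comparison shows it has maximal weight;
dually for moves from `j+1` to `j`. The extreme weights are those of the greedy tuples
`(r_0, …, r_{I-1}, δ, 0, …)` and `(…, 0, θ, r_{M+1}, …, r_{k-1})`, so the weights fill an interval
of `L(r,h)` integers, and each such move changes the weight by `±1` and the sum `∑ x_j a_j`
strictly in the same direction.

If `A` is an arithmetic progression the sum is an affine function of the weight, which gives
`|h^{(r)}A| = L(r,h)`. Conversely, if two tuples of equal weight had different sums, stepping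
down from the smaller one and up from the larger one would produce `L(r,h) + 1` distinct sums;
so when `|h^{(r)}A| = L(r,h)` the sum depends only on the weight. Comparing two tuples that differ
by a unit moved across the gap at `j` and one moved back across the gap at `j' > j + 1` shows
that these two gaps of `A` are equal, and for `k ≥ 5` this links all gaps. -/

section Counting

variable {σ β : Type*} [LinearOrder β] {R : Set σ} {f : σ → β} {w : σ → ℤ}

lemma add_one_le_ncard_image_inter_Ici (hfin : (f '' R).Finite) {hi : ℤ}
    (hup : ∀ s ∈ R, w s < hi → ∃ t ∈ R, w t = w s + 1 ∧ f s < f t) :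
    ∀ n : ℕ, ∀ s ∈ R, w s + n ≤ hi → n + 1 ≤ (f '' R ∩ Set.Ici (f s)).ncard := by
  intro n
  induction n with
  | zero =>
    intro s hs _
    exact (Set.ncard_pos (hfin.subset Set.inter_subset_left)).2
      ⟨f s, Set.mem_image_of_mem f hs, le_rfl⟩
  | succ n ih =>
    intro s hs hn
    obtain ⟨t, ht, hwt, hst⟩ := hup s hs (by omega)
    have hnot : f s ∉ f '' R ∩ Set.Ici (f t) := fun h => not_le.2 hst h.2
    have hsub : insert (f s) (f '' R ∩ Set.Ici (f t)) ⊆ f '' R ∩ Set.Ici (f s) :=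
      Set.insert_subset ⟨Set.mem_image_of_mem f hs, le_rfl⟩
        (Set.inter_subset_inter_right _ (Set.Ici_subset_Ici.2 hst.le))
    calc n + 1 + 1 ≤ (f '' R ∩ Set.Ici (f t)).ncard + 1 := by
          gcongr; exact ih t ht (by omega)
      _ = (insert (f s) (f '' R ∩ Set.Ici (f t))).ncard :=
          (Set.ncard_insert_of_notMem hnot (hfin.subset Set.inter_subset_left)).symm
      _ ≤ _ := Set.ncard_le_ncard hsub (hfin.subset Set.inter_subset_left)

lemma eq_of_ncard_image_le (hfin : (f '' R).Finite) {lo hi : ℤ}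
    (hcard : ((f '' R).ncard : ℤ) ≤ hi - lo + 1) (hw : ∀ s ∈ R, lo ≤ w s ∧ w s ≤ hi)
    (hup : ∀ s ∈ R, w s < hi → ∃ t ∈ R, w t = w s + 1 ∧ f s < f t)
    (hdown : ∀ s ∈ R, lo < w s → ∃ t ∈ R, w t = w s - 1 ∧ f t < f s)
    {x y : σ} (hx : x ∈ R) (hy : y ∈ R) (hxy : w x = w y) : f x = f y := by
  suffices key : ∀ x ∈ R, ∀ y ∈ R, w x = w y → ¬ f x < f y from
    le_antisymm (not_lt.1 (key y hy x hx hxy.symm)) (not_lt.1 (key x hx y hy hxy))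
  intro x hx y hy hxy hlt
  obtain ⟨m, hm⟩ := Int.eq_ofNat_of_zero_le (sub_nonneg.2 (hw x hx).1)
  obtain ⟨n, hn⟩ := Int.eq_ofNat_of_zero_le (sub_nonneg.2 (hw y hy).2)
  have habove := add_one_le_ncard_image_inter_Ici hfin hup n y hy (by omega)
  have hbelow : m + 1 ≤ (f '' R ∩ Set.Iic (f x)).ncard :=
    add_one_le_ncard_image_inter_Ici (β := βᵒᵈ) (f := fun s => OrderDual.toDual (f s))
      (w := fun s => -w s) hfin (hi := -lo)
      (fun s hs hlt => by
        obtain ⟨t, ht, hwt, hft⟩ := hdown s hs (by omega)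
        exact ⟨t, ht, by omega, hft⟩) m x hx (by omega)
  have hdisj : Disjoint (f '' R ∩ Set.Iic (f x)) (f '' R ∩ Set.Ici (f y)) :=
    Set.disjoint_left.2 fun z hz1 hz2 => (lt_of_le_of_lt hz1.2 hlt).not_ge hz2.2
  have hunion := Set.ncard_union_eq hdisj (hfin.subset Set.inter_subset_left)
    (hfin.subset Set.inter_subset_left)
  have hle : (f '' R ∩ Set.Iic (f x) ∪ f '' R ∩ Set.Ici (f y)).ncard ≤ (f '' R).ncard :=
    Set.ncard_le_ncard (Set.union_subset Set.inter_subset_left Set.inter_subset_left) hfin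
  omega

lemma image_eq_Icc_of_forall_exists_succ {lo hi : ℤ} (hw : ∀ s ∈ R, lo ≤ w s ∧ w s ≤ hi)
    (hup : ∀ s ∈ R, w s < hi → ∃ t ∈ R, w t = w s + 1) {s₀ : σ} (hs₀ : s₀ ∈ R)
    (hlo : w s₀ = lo) : w '' R = Set.Icc lo hi := by
  refine Set.Subset.antisymm (Set.image_subset_iff.2 hw) fun v hv => ?_
  induction v, hv.1 using Int.leInduction with
  | base => exact ⟨s₀, hs₀, hlo⟩
  | succ v hlov ih =>
    obtain ⟨s, hs, hsv⟩ := ih ⟨hlov, by linarith [hv.2]⟩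
    obtain ⟨t, ht, hwt⟩ := hup s hs (by linarith [hv.2])
    exact ⟨t, ht, by rw [hwt, hsv]⟩

end Counting

section WeightedSum

variable {S : Type*} [CommSemiring S]

def weightedSum (k : ℕ) (g : ℕ → S) (s : ℕ → ℕ) : S := ∑ i ∈ range k, (s i : S) * g i

lemma weightedSum_add_single (k : ℕ) (g : ℕ → S) (s : ℕ → ℕ) {j : ℕ} (hj : j < k) :
    weightedSum k g (s + Pi.single j 1) = weightedSum k g s + g j := by
  simp [weightedSum, add_mul, sum_add_distrib, Pi.single_apply, hj]

lemma weightedSum_tsub_single_add (k : ℕ) (g : ℕ → S) {s : ℕ → ℕ} {i : ℕ} (hi : i < k)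
    (hsi : 0 < s i) : weightedSum k g (s - Pi.single i 1) + g i = weightedSum k g s := by
  rw [← weightedSum_add_single k g _ hi, tsub_add_cancel_of_le]
  intro t
  by_cases ht : t = i <;> simp [ht, Nat.one_le_iff_ne_zero, hsi.ne']

lemma sum_range_eq_weightedSum_one (k : ℕ) (s : ℕ → ℕ) :
    ∑ i ∈ range k, s i = weightedSum k 1 s := by
  simp [weightedSum]

end WeightedSum

lemma Sw_eq_weightedSum (k : ℕ) (s : ℕ → ℕ) : Sw k s = weightedSum k (fun j => (j : ℤ)) s := by
  simp only [Sw, weightedSum, mul_comm]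

section Tuples

variable {k n i j : ℕ} {r s : ℕ → ℕ}

lemma InR.tsub_single (hs : InR k r (n + 1) s) (hi : i < k) (hsi : 0 < s i) :
    InR k r n (s - Pi.single i 1) := by
  refine ⟨fun t ht => (Nat.sub_le _ _).trans (hs.1 t ht), fun t ht => ?_, ?_⟩
  · simp [hs.2.1 t ht]
  · have := weightedSum_tsub_single_add k (1 : ℕ → ℕ) hi hsi
    have hsum := hs.2.2
    rw [sum_range_eq_weightedSum_one] at hsum ⊢
    simp only [Pi.one_apply] at this
    omega

lemma InR.add_single (hs : InR k r n s) (hj : j < k) (hsj : s j < r j) :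
    InR k r (n + 1) (s + Pi.single j 1) := by
  refine ⟨fun t ht => ?_, fun t ht => ?_, ?_⟩
  · by_cases htj : t = j
    · subst htj; simpa using hsj
    · simpa [Pi.single_apply, htj] using hs.1 t ht
  · simp [hs.2.1 t ht, show t ≠ j by omega]
  · rw [sum_range_eq_weightedSum_one, weightedSum_add_single _ _ _ hj,
      ← sum_range_eq_weightedSum_one, hs.2.2]
    rfl

lemma InR.tsub_single_add_single (hs : InR k r n s) (hi : i < k) (hj : j < k) (hij : i ≠ j)
    (hsi : 0 < s i) (hsj : s j < r j) : InR k r n (s - Pi.single i 1 + Pi.single j 1) := by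
  obtain ⟨n, rfl⟩ : ∃ m, n = m + 1 := ⟨n - 1, by
    have := single_le_sum (fun _ _ => Nat.zero_le _) (mem_range.2 hi) (f := s)
    have := hs.2.2; omega⟩
  exact (hs.tsub_single hi hsi).add_single hj (by simpa [Pi.single_apply, hij.symm] using hsj)

lemma weightedSum_tsub_single_add_single {S : Type*} [CommRing S] (g : ℕ → S) (hi : i < k)
    (hj : j < k) (hsi : 0 < s i) :
    weightedSum k g (s - Pi.single i 1 + Pi.single j 1) = weightedSum k g s - g i + g j := by
  rw [weightedSum_add_single _ _ _ hj, ← weightedSum_tsub_single_add k g hi hsi]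
  ring

end Tuples

lemma Sw_eq_sum_tails (k : ℕ) (x : ℕ → ℕ) :
    Sw k x = ∑ t ∈ Ico 1 k, ((∑ j ∈ Ico t k, x j : ℕ) : ℤ) := by
  push_cast
  rw [Finset.sum_comm' (t' := range k) (s' := fun j => Ico 1 (j + 1))]
  · simp [Sw]
  · intro t j
    simp only [mem_Ico, mem_range]
    omega

lemma Sw_le_Sw_of_sum_Ico_le {k : ℕ} {x y : ℕ → ℕ}
    (h : ∀ t < k, ∑ j ∈ Ico t k, x j ≤ ∑ j ∈ Ico t k, y j) : Sw k x ≤ Sw k y := by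
  rw [Sw_eq_sum_tails, Sw_eq_sum_tails]
  exact sum_le_sum fun t ht => Nat.cast_le.2 (h t (mem_Ico.1 ht).2)

def TopPacked (k : ℕ) (r s : ℕ → ℕ) : Prop :=
  ∀ i j, i < j → j < k → s i ≠ 0 → s j = r j

def BottomPacked (k : ℕ) (r s : ℕ → ℕ) : Prop :=
  ∀ i j, i < j → j < k → s j ≠ 0 → s i = r i

section Packed

variable {k n : ℕ} {r x y : ℕ → ℕ}

lemma Sw_le_of_topPacked (hx : InR k r n x) (hy : InR k r n y) (hpack : TopPacked k r y) :
    Sw k x ≤ Sw k y := by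
  refine Sw_le_Sw_of_sum_Ico_le fun t ht => ?_
  have hxs := sum_range_add_sum_Ico x ht.le
  have hys := sum_range_add_sum_Ico y ht.le
  by_cases hz : ∃ i < t, y i ≠ 0
  · obtain ⟨i, hit, hyi⟩ := hz
    calc ∑ j ∈ Ico t k, x j ≤ ∑ j ∈ Ico t k, r j :=
          sum_le_sum fun j hj => hx.1 j (mem_Ico.1 hj).2
      _ = ∑ j ∈ Ico t k, y j := sum_congr rfl fun j hj =>
          (hpack i j (by grind) (mem_Ico.1 hj).2 hyi).symm
  · push Not at hz
    have : ∑ j ∈ range t, y j = 0 := sum_eq_zero fun j hj => hz j (mem_range.1 hj)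
    have := hx.2.2; have := hy.2.2
    omega

lemma Sw_le_of_bottomPacked (hx : InR k r n x) (hy : InR k r n y)
    (hpack : BottomPacked k r y) : Sw k y ≤ Sw k x := by
  refine Sw_le_Sw_of_sum_Ico_le fun t ht => ?_
  have hxs := sum_range_add_sum_Ico x ht.le
  have hys := sum_range_add_sum_Ico y ht.le
  by_cases hz : ∃ j ∈ Ico t k, y j ≠ 0
  · obtain ⟨j, hj, hyj⟩ := hz
    have : ∑ i ∈ range t, x i ≤ ∑ i ∈ range t, y i :=
      calc ∑ i ∈ range t, x i ≤ ∑ i ∈ range t, r i :=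
            sum_le_sum fun i hi => hx.1 i (by grind)
        _ = ∑ i ∈ range t, y i := sum_congr rfl fun i hi =>
            (hpack i j (by grind) (mem_Ico.1 hj).2 hyj).symm
    have := hx.2.2; have := hy.2.2
    omega
  · push Not at hz
    rw [sum_eq_zero hz]
    exact Nat.zero_le _

lemma topPacked_of_forall_not_step (hr : ∀ j < k, 0 < r j) (hx : ∀ j < k, x j ≤ r j)
    (hno : ∀ j, j + 1 < k → 0 < x j → r (j + 1) ≤ x (j + 1)) : TopPacked k r x := by
  intro i j hij hjk hxi
  induction j with
  | zero => omega
  | succ j ih =>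
    have hxj : x j ≠ 0 := by
      rcases Nat.lt_succ_iff_lt_or_eq.1 hij with h | rfl
      · rw [ih h (by omega)]; exact (hr j (by omega)).ne'
      · exact hxi
    exact le_antisymm (hx _ hjk) (hno j hjk (Nat.pos_of_ne_zero hxj))

lemma bottomPacked_of_forall_not_step (hr : ∀ j < k, 0 < r j) (hx : ∀ j < k, x j ≤ r j)
    (hno : ∀ j, j + 1 < k → 0 < x (j + 1) → r j ≤ x j) : BottomPacked k r x := by
  intro i j hij hjk hxj
  induction j with
  | zero => omega
  | succ j ih =>
    have hxj' : x j = r j := le_antisymm (hx j (by omega)) (hno j hjk (Nat.pos_of_ne_zero hxj))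
    rcases Nat.lt_succ_iff_lt_or_eq.1 hij with h | rfl
    · exact ih h (by omega) (by rw [hxj']; exact (hr j (by omega)).ne')
    · exact hxj'

variable {a : ℕ → ℤ}

lemma exists_step_up_of_Sw_lt (hr : ∀ j < k, 0 < r j) (ha : ∀ i j, i < j → j < k → a i < a j)
    (hy : InR k r n y) (hx : InR k r n x) (hlt : Sw k x < Sw k y) :
    ∃ z, InR k r n z ∧ Sw k z = Sw k x + 1 ∧ weightedSum k a x < weightedSum k a z := by
  obtain ⟨j, hj, hxj, hxj1⟩ : ∃ j, j + 1 < k ∧ 0 < x j ∧ x (j + 1) < r (j + 1) := by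
    by_contra! hno
    exact hlt.not_ge (Sw_le_of_topPacked hy hx (topPacked_of_forall_not_step hr hx.1 hno))
  refine ⟨_, hx.tsub_single_add_single (by omega) hj (by omega) hxj hxj1, ?_, ?_⟩
  · rw [Sw_eq_weightedSum, Sw_eq_weightedSum,
      weightedSum_tsub_single_add_single _ (by omega) hj hxj]
    push_cast; ring
  · rw [weightedSum_tsub_single_add_single _ (by omega) hj hxj]
    linarith [ha j (j + 1) (by omega) hj]

lemma exists_step_down_of_lt_Sw (hr : ∀ j < k, 0 < r j) (ha : ∀ i j, i < j → j < k → a i < a j)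
    (hy : InR k r n y) (hx : InR k r n x) (hlt : Sw k y < Sw k x) :
    ∃ z, InR k r n z ∧ Sw k z = Sw k x - 1 ∧ weightedSum k a z < weightedSum k a x := by
  obtain ⟨j, hj, hxj1, hxj⟩ : ∃ j, j + 1 < k ∧ 0 < x (j + 1) ∧ x j < r j := by
    by_contra! hno
    exact hlt.not_ge (Sw_le_of_bottomPacked hy hx (bottomPacked_of_forall_not_step hr hx.1 hno))
  refine ⟨_, hx.tsub_single_add_single hj (by omega) (by omega) hxj1 hxj, ?_, ?_⟩
  · rw [Sw_eq_weightedSum, Sw_eq_weightedSum,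
      weightedSum_tsub_single_add_single _ hj (by omega) hxj1]
    push_cast; ring
  · rw [weightedSum_tsub_single_add_single _ hj (by omega) hxj1]
    linarith [ha j (j + 1) (by omega) hj]

end Packed

def minTuple (I δ : ℕ) (r : ℕ → ℕ) : ℕ → ℕ :=
  fun j => if j < I then r j else if j = I then δ else 0

def maxTuple (k M θ : ℕ) (r : ℕ → ℕ) : ℕ → ℕ :=
  fun j => if j < M ∨ k ≤ j then 0 else if j = M then θ else r j

section Extremal

variable {k h I M δ θ : ℕ} {r : ℕ → ℕ}

lemma weightedSum_minTuple {S : Type*} [CommSemiring S] (g : ℕ → S) (hIk : I < k) :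
    weightedSum k g (minTuple I δ r) = ∑ j ∈ range I, (r j : S) * g j + δ * g I := by
  rw [weightedSum, ← sum_range_add_sum_Ico _ hIk, sum_range_succ]
  have hlow : ∑ j ∈ range I, (minTuple I δ r j : S) * g j = ∑ j ∈ range I, (r j : S) * g j :=
    sum_congr rfl fun j hj => by simp [minTuple, mem_range.1 hj]
  have hhigh : ∑ j ∈ Ico (I + 1) k, (minTuple I δ r j : S) * g j = 0 :=
    sum_eq_zero fun j hj => by
      simp [minTuple, show ¬ j < I by grind, show j ≠ I by grind]
  rw [hlow, hhigh]
  simp [minTuple]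

lemma weightedSum_maxTuple {S : Type*} [CommSemiring S] (g : ℕ → S) (hMk : M < k) :
    weightedSum k g (maxTuple k M θ r) = θ * g M + ∑ j ∈ Ico (M + 1) k, (r j : S) * g j := by
  rw [weightedSum, ← sum_range_add_sum_Ico _ hMk, sum_range_succ]
  have hlow : ∑ j ∈ range M, (maxTuple k M θ r j : S) * g j = 0 :=
    sum_eq_zero fun j hj => by simp [maxTuple, mem_range.1 hj]
  have hhigh : ∑ j ∈ Ico (M + 1) k, (maxTuple k M θ r j : S) * g j
      = ∑ j ∈ Ico (M + 1) k, (r j : S) * g j :=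
    sum_congr rfl fun j hj => by
      simp [maxTuple, show ¬ (j < M ∨ k ≤ j) by grind, show j ≠ M by grind]
  rw [hlow, hhigh]
  simp [maxTuple, hMk.not_ge]

lemma InR_minTuple (hIk : I < k) (hδ : δ ≤ r I) (hsum : ∑ j ∈ range I, r j + δ = h) :
    InR k r h (minTuple I δ r) := by
  refine ⟨fun j _ => ?_, fun j hj => ?_, ?_⟩
  · unfold minTuple; split_ifs <;> grind
  · simp [minTuple, show ¬ j < I by omega, show j ≠ I by omega]
  · simpa [sum_range_eq_weightedSum_one, weightedSum_minTuple _ hIk] using hsum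

lemma InR_maxTuple (hMk : M < k) (hθ : θ ≤ r M) (hsum : θ + ∑ j ∈ Ico (M + 1) k, r j = h) :
    InR k r h (maxTuple k M θ r) := by
  refine ⟨fun j _ => ?_, fun j hj => by simp [maxTuple, hj], ?_⟩
  · unfold maxTuple; split_ifs <;> grind
  · simpa [sum_range_eq_weightedSum_one, weightedSum_maxTuple _ hMk] using hsum

lemma bottomPacked_minTuple : BottomPacked k r (minTuple I δ r) := by
  intro i j hij _ hj
  unfold minTuple at hj ⊢
  split_ifs at hj ⊢ <;> omega

lemma topPacked_maxTuple : TopPacked k r (maxTuple k M θ r) := by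
  intro i j hij hjk hi
  unfold maxTuple at hi ⊢
  split_ifs at hi ⊢ <;> omega

lemma Lval_eq_Sw_maxTuple_sub_Sw_minTuple (hIk : I < k) (hMk : M < k) :
    Lval k I M r δ θ = Sw k (maxTuple k M θ r) - Sw k (minTuple I δ r) + 1 := by
  rw [Sw_eq_weightedSum, Sw_eq_weightedSum, weightedSum_maxTuple _ hMk, weightedSum_minTuple _ hIk,
    Lval]
  simp only [mul_comm]
  ring

end Extremal

section Cutoffs

variable {k h I M δ θ : ℕ} {r : ℕ → ℕ}

lemma prefix_cutoff_spec (hhk : h + 2 ≤ ∑ j ∈ range k, r j) (hIk : I ≤ k)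
    (hI : ∀ I' ≤ k, ∑ j ∈ range I', r j ≤ h → I' ≤ I)
    (hδ : (δ : ℤ) = h - ∑ j ∈ range I, (r j : ℤ)) :
    I < k ∧ δ ≤ r I ∧ ∑ j ∈ range I, r j + δ = h := by
  have hsum : ∑ j ∈ range I, r j + δ = h := by
    rw [← Nat.cast_sum] at hδ; omega
  have hIk' : I < k := lt_of_le_of_ne hIk fun hIk => by subst hIk; omega
  refine ⟨hIk', not_lt.1 fun hlt => ?_, hsum⟩
  have := hI (I + 1) hIk' (by rw [sum_range_succ]; omega)
  omega

lemma suffix_cutoff_spec (hhk : h + 2 ≤ ∑ j ∈ range k, r j)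
    (hM : ∀ M', ∑ j ∈ Ico (M' + 1) k, r j ≤ h → M ≤ M')
    (hθ : (θ : ℤ) = h - ∑ j ∈ Ico (M + 1) k, (r j : ℤ)) :
    M < k ∧ θ ≤ r M ∧ θ + ∑ j ∈ Ico (M + 1) k, r j = h := by
  have hsum : θ + ∑ j ∈ Ico (M + 1) k, r j = h := by
    rw [← Nat.cast_sum] at hθ; omega
  have hk : 0 < k := Nat.pos_of_ne_zero fun hk => by subst hk; simp at hhk
  have hMk : M < k := by
    have := hM (k - 1) (by simp [Nat.sub_add_cancel hk]); omega
  refine ⟨hMk, not_lt.1 fun hlt => ?_, hsum⟩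
  have hM' : ∑ j ∈ Ico M k, r j < h := by rw [sum_eq_sum_Ico_succ_bot hMk]; omega
  rcases Nat.eq_zero_or_pos M with hM0 | hM0
  · subst hM0; rw [← range_eq_Ico] at hM'; omega
  · have := hM (M - 1) (by rw [Nat.sub_add_cancel hM0]; omega); omega

end Cutoffs

lemma exists_sum_eq_of_le_of_le (lo hi : ℕ → ℕ) (k n : ℕ) (hle : ∀ i < k, lo i ≤ hi i)
    (hlo : ∑ i ∈ range k, lo i ≤ n) (hhi : n ≤ ∑ i ∈ range k, hi i) :
    ∃ x : ℕ → ℕ, (∀ i < k, lo i ≤ x i ∧ x i ≤ hi i) ∧ (∀ i, k ≤ i → x i = 0) ∧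
      ∑ i ∈ range k, x i = n := by
  induction k generalizing n with
  | zero => exact ⟨0, by simp, by simp, by simp at hhi; simp [hhi]⟩
  | succ k ih =>
    rw [sum_range_succ] at hlo hhi
    have hk := hle k k.lt_succ_self
    obtain ⟨x, hx, hx0, hxs⟩ := ih (max (∑ i ∈ range k, lo i) (n - hi k))
      (fun i hi => hle i (by omega)) (le_max_left _ _)
      (max_le (sum_le_sum fun i hi => hle i (by simp at hi; omega)) (by omega))
    refine ⟨Function.update x k (n - max (∑ i ∈ range k, lo i) (n - hi k)), fun i hi => ?_,
      fun i hi => ?_, ?_⟩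
    · rcases eq_or_ne i k with rfl | hik
      · simp only [Function.update_self]; omega
      · simpa [hik] using hx i (by omega)
    · simpa [show i ≠ k by omega] using hx0 i (by omega)
    · rw [sum_range_succ, sum_congr rfl fun i hi => Function.update_of_ne
        (show i ≠ k by simp at hi; omega) _ _, hxs, Function.update_self]
      omega

section Gaps

variable {k h : ℕ} {r : ℕ → ℕ} {a : ℕ → ℤ}

lemma gap_eq_gap_of_Sw_determines_weightedSum (hr : ∀ j < k, 0 < r j) (hh2 : 2 ≤ h)
    (hhk : h + 2 ≤ ∑ j ∈ range k, r j)
    (hdet : ∀ x y, InR k r h x → InR k r h y → Sw k x = Sw k y →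
      weightedSum k a x = weightedSum k a y)
    {j j' : ℕ} (hjj' : j + 1 < j') (hj'k : j' + 1 < k) :
    a (j + 1) - a j = a (j' + 1) - a j' := by
  -- A tuple `u ∈ R(r, h+2)` with a unit at each of `j, j+1, j', j'+1` loses either the units at
  -- `j, j'+1` or those at `j+1, j'`: equal weights, sums differing by the difference of the gaps.
  set T : Finset ℕ := {j, j + 1, j', j' + 1}
  have hTk : ∀ i ∈ T, i < k := by simp [T]; omega
  obtain ⟨u, hu, hu0, husum⟩ := exists_sum_eq_of_le_of_le (fun i => if i ∈ T then 1 else 0) r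
    k (h + 2) (fun i hi => by split_ifs; exacts [hr i hi, Nat.zero_le _])
    (by
      rw [sum_boole]
      exact (card_le_card fun i hi => (mem_filter.1 hi).2).trans (card_le_four.trans (by omega)))
    hhk
  have huR : InR k r (h + 2) u := ⟨fun i hi => (hu i hi).2, hu0, husum⟩
  have hupos : ∀ i ∈ T, 0 < u i := fun i hiT =>
    lt_of_lt_of_le one_pos (by simpa [hiT] using (hu i (hTk i hiT)).1)
  have hremove : ∀ p ∈ T, ∀ q ∈ T, p ≠ q →
      InR k r h (u - Pi.single p 1 - Pi.single q 1) ∧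
      ∀ g : ℕ → ℤ,
        weightedSum k g (u - Pi.single p 1 - Pi.single q 1) + g q + g p = weightedSum k g u := by
    intro p hp q hq hpq
    have hq' : 0 < (u - Pi.single p 1 : ℕ → ℕ) q := by simpa [hpq.symm] using hupos q hq
    refine ⟨(huR.tsub_single (hTk p hp) (hupos p hp)).tsub_single (hTk q hq) hq', fun g => ?_⟩
    rw [weightedSum_tsub_single_add k g (hTk q hq) hq',
      weightedSum_tsub_single_add k g (hTk p hp) (hupos p hp)]
  obtain ⟨hyR, hy⟩ := hremove j (by simp [T]) (j' + 1) (by simp [T]) (by omega)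
  obtain ⟨hzR, hz⟩ := hremove (j + 1) (by simp [T]) j' (by simp [T]) (by omega)
  have hSw := hdet _ _ hyR hzR (by
    have hyw := hy fun i => (i : ℤ)
    have hzw := hz fun i => (i : ℤ)
    push_cast at hyw hzw
    rw [Sw_eq_weightedSum, Sw_eq_weightedSum]
    linarith)
  linarith [hy a, hz a]

lemma exists_AP_of_gap_eq (hk : 5 ≤ k) (ha : ∀ i j, i < j → j < k → a i < a j)
    (hgap : ∀ j j', j + 1 < j' → j' + 1 < k → a (j + 1) - a j = a (j' + 1) - a j') :
    ∃ d : ℤ, 0 < d ∧ ∀ i < k, a i = a 0 + (i : ℤ) * d := by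
  have hgap0 : ∀ j, j + 1 < k → a (j + 1) - a j = a 1 - a 0 := by
    intro j hj
    match j with
    | 0 => rfl
    | 1 => linarith [hgap 0 3 (by omega) (by omega), hgap 1 3 (by omega) (by omega)]
    | j + 2 => linarith [hgap 0 (j + 2) (by omega) hj]
  refine ⟨a 1 - a 0, by linarith [ha 0 1 (by omega) (by omega)], fun i hi => ?_⟩
  induction i with
  | zero => simp
  | succ i ih => push_cast; linarith [ih (by omega), hgap0 i hi]

end Gaps

lemma genSumset_eq_image (k : ℕ) (a : ℕ → ℤ) (r : ℕ → ℕ) (h : ℕ) :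
    genSumset k a r h = weightedSum k a '' {s | InR k r h s} := by
  ext z
  constructor
  · rintro ⟨s, hsr, hsum, rfl⟩
    have hrestrict : ∀ i ∈ range k, (if i < k then s i else 0) = s i :=
      fun i hi => if_pos (mem_range.1 hi)
    refine ⟨fun i => if i < k then s i else 0, ⟨fun i hi => by simp [hi, hsr i hi],
      fun i hi => by simp [hi.not_gt], by rw [sum_congr rfl hrestrict, hsum]⟩, ?_⟩
    exact sum_congr rfl fun i hi => by simp [mem_range.1 hi]
  · rintro ⟨s, hs, rfl⟩
    exact ⟨s, hs.1, hs.2.2, rfl⟩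

section AP

variable {k h : ℕ} {r : ℕ → ℕ} {a : ℕ → ℤ} {d : ℤ}

lemma weightedSum_eq_of_AP {s : ℕ → ℕ} (hs : InR k r h s)
    (hAP : ∀ i < k, a i = a 0 + (i : ℤ) * d) :
    weightedSum k a s = h * a 0 + d * Sw k s := by
  have hsum : ∑ i ∈ range k, (s i : ℤ) = h := by exact_mod_cast hs.2.2
  rw [weightedSum, sum_congr rfl fun i hi => by rw [hAP i (mem_range.1 hi)], Sw, ← hsum, sum_mul,
    mul_sum, ← sum_add_distrib]
  exact sum_congr rfl fun i _ => by ring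

lemma ncard_image_weightedSum_of_AP (hd : 0 < d) (hAP : ∀ i < k, a i = a 0 + (i : ℤ) * d) :
    (weightedSum k a '' {s | InR k r h s}).ncard = (Sw k '' {s | InR k r h s}).ncard := by
  rw [show weightedSum k a '' {s | InR k r h s} =
      (fun v => h * a 0 + d * v) '' (Sw k '' {s | InR k r h s})
    by rw [Set.image_image]; exact Set.image_congr fun s hs => weightedSum_eq_of_AP hs hAP]
  exact Set.ncard_image_of_injective _ fun v w hvw => by simpa [hd.ne'] using hvw

end AP

theorem general_hfold_eq_iff_AP_general (k h I M δ θ : ℕ) (a : ℕ → ℤ) (r : ℕ → ℕ)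
    (hk5 : 5 ≤ k)
    (ha : ∀ i j, i < j → j < k → a i < a j)
    (hr : ∀ j < k, 0 < r j)
    (hh2 : 2 ≤ h) (hhk : h + 2 ≤ ∑ j ∈ Finset.range k, r j)
    (hIk : I ≤ k)
    (hI2 : ∀ I' ≤ k, (∑ j ∈ Finset.range I', r j ≤ h) → I' ≤ I)
    (hM2 : ∀ M', (∑ j ∈ Finset.Ico (M' + 1) k, r j ≤ h) → M ≤ M')
    (hδ : (δ : ℤ) = (h : ℤ) - ∑ j ∈ Finset.range I, (r j : ℤ))
    (hθ : (θ : ℤ) = (h : ℤ) - ∑ j ∈ Finset.Ico (M + 1) k, (r j : ℤ)) :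
    ((genSumset k a r h).ncard : ℤ) = Lval k I M r δ θ ↔
      ∃ d : ℤ, 0 < d ∧ ∀ i < k, a i = a 0 + (i : ℤ) * d := by
  obtain ⟨hIk', hδr, hsumI⟩ := prefix_cutoff_spec hhk hIk hI2 hδ
  obtain ⟨hMk', hθr, hsumM⟩ := suffix_cutoff_spec hhk hM2 hθ
  set R := {s | InR k r h s}
  have hmin : minTuple I δ r ∈ R := InR_minTuple hIk' hδr hsumI
  have hmax : maxTuple k M θ r ∈ R := InR_maxTuple hMk' hθr hsumM
  have hw : ∀ s ∈ R, Sw k (minTuple I δ r) ≤ Sw k s ∧ Sw k s ≤ Sw k (maxTuple k M θ r) :=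
    fun s hs => ⟨Sw_le_of_bottomPacked hs hmin bottomPacked_minTuple,
      Sw_le_of_topPacked hs hmax topPacked_maxTuple⟩
  have hup := fun s (hs : s ∈ R) => exists_step_up_of_Sw_lt hr ha hmax hs
  have hdown := fun s (hs : s ∈ R) => exists_step_down_of_lt_Sw hr ha hmin hs
  have hlohi := (hw _ hmin).2
  rw [genSumset_eq_image, Lval_eq_Sw_maxTuple_sub_Sw_minTuple hIk' hMk']
  constructor
  · intro hcard
    exact exists_AP_of_gap_eq hk5 ha fun j j' =>
      gap_eq_gap_of_Sw_determines_weightedSum hr hh2 hhk fun x y hx hy =>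
        eq_of_ncard_image_le (Set.finite_of_ncard_pos (by omega)) hcard.le hw hup hdown hx hy
  · rintro ⟨d, hd, hAP⟩
    rw [ncard_image_weightedSum_of_AP hd hAP, image_eq_Icc_of_forall_exists_succ hw
      (fun s hs hlt => (hup s hs hlt).imp fun _ ht => ⟨ht.1, ht.2.1⟩) hmin rfl,
      ← Finset.coe_Icc, Set.ncard_coe_finset, Int.card_Icc]
    omega

theorem general_hfold_eq_iff_AP (k h I M δ θ : ℕ) (a : ℕ → ℤ) (r : ℕ → ℕ)
    (hk5 : 5 ≤ k)
    (ha : ∀ i j, i < j → j < k → a i < a j)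
    (hr : ∀ j < k, 0 < r j)
    (hh2 : 2 ≤ h) (hhk : h + 2 ≤ ∑ j ∈ Finset.range k, r j)
    (hIk : I ≤ k)
    (hI1 : ∑ j ∈ Finset.range I, r j ≤ h)
    (hI2 : ∀ I' ≤ k, (∑ j ∈ Finset.range I', r j ≤ h) → I' ≤ I)
    (hM1 : ∑ j ∈ Finset.Ico (M + 1) k, r j ≤ h)
    (hM2 : ∀ M', (∑ j ∈ Finset.Ico (M' + 1) k, r j ≤ h) → M ≤ M')
    (hδ : (δ : ℤ) = (h : ℤ) - ∑ j ∈ Finset.range I, (r j : ℤ))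
    (hθ : (θ : ℤ) = (h : ℤ) - ∑ j ∈ Finset.Ico (M + 1) k, (r j : ℤ)) :
    ((genSumset k a r h).ncard : ℤ) = Lval k I M r δ θ ↔
      ∃ d : ℤ, 0 < d ∧ ∀ i < k, a i = a 0 + (i : ℤ) * d :=
  general_hfold_eq_iff_AP_general k h I M δ θ a r hk5 ha hr hh2 hhk hIk hI2 hM2 hδ hθ
end

section
/- Let X_1 → X_2 → ... → X_t and X_1 → X_2' → ... → X_{t−1}' → X_t be two different (r,h)-paths from X_1 to X_t. If A is a set of k integers with |h^{(r)}A| = L(r,h), then φ_A(X_i) = φ_A(X_i') for i = 2,...,t−1, where φ_A(X) = Σ x_j a_j. -/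
/-!
Every step X → X' raises the weight S(X) = ∑ j x_j by exactly one and raises φ_A strictly.
A tuple of R(r,h) admitting no backward step is full up to one coordinate and empty after it,
which forces S = ∑_{j<I} j r_j + Iδ; symmetrically a tuple admitting no forward step has
S = ∑_{j>M} j r_j + Mθ. The difference of these two values is L(r,h) - 1.
Descending and ascending from X by steps therefore shows that at least S(X) - S_min elements of
h^{(r)}A lie below φ_A(X) and at least S_max - S(X) above it. When |h^{(r)}A| = L(r,h) both
bounds are equalities, so φ_A(X) is determined by S(X). Along both paths S(X_i) = S(X_1) + i - 1.
-/

open Finset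

def phi (k : ℕ) (a : ℕ → ℤ) (x : ℕ → ℕ) : ℤ := ∑ j ∈ range k, (x j : ℤ) * a j

namespace IsStep

variable {k : ℕ} {U W : ℕ → ℕ}

theorem exists_sum_mul_eq_s11 (hs : IsStep k U W) :
    ∃ j, j + 1 < k ∧ ∀ c : ℕ → ℤ,
      ∑ i ∈ range k, c i * W i = ∑ i ∈ range k, c i * U i + (c (j + 1) - c j) := by
  obtain ⟨j, hjk, hj, hj1, hrest⟩ := hs
  refine ⟨j, hjk, fun c => ?_⟩
  have hpoint : ∀ i, c i * (W i : ℤ) =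
      c i * U i + ((if i = j + 1 then c i else 0) - (if i = j then c i else 0)) := by
    intro i
    split_ifs with h1 h0 h0
    · omega
    · subst h1; rw [hj1]; push_cast; ring
    · subst h0; rw [hj]; push_cast; ring
    · rw [hrest i h0 h1]; ring
  simp only [hpoint, sum_add_distrib, sum_sub_distrib, sum_ite_eq', mem_range, hjk,
    show j < k by omega, if_true]

theorem Sw_eq_s11 (hs : IsStep k U W) : Sw k W = Sw k U + 1 := by
  obtain ⟨j, -, hc⟩ := hs.exists_sum_mul_eq_s11
  simp only [Sw, hc]
  push_cast
  ring

theorem sum_eq_s11 (hs : IsStep k U W) : ∑ i ∈ range k, W i = ∑ i ∈ range k, U i := by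
  obtain ⟨j, -, hc⟩ := hs.exists_sum_mul_eq_s11
  have := hc 1
  simp only [Pi.one_apply, one_mul, sub_self, add_zero] at this
  exact_mod_cast this

theorem phi_lt {a : ℕ → ℤ} (ha : ∀ i j, i < j → j < k → a i < a j) (hs : IsStep k U W) :
    phi k a U < phi k a W := by
  obtain ⟨j, hjk, hc⟩ := hs.exists_sum_mul_eq_s11
  simp only [phi, mul_comm _ (a _), hc a]
  linarith [ha j (j + 1) (by omega) hjk]

theorem eq_of_le (hs : IsStep k U W) {i : ℕ} (hi : k ≤ i) : W i = U i := by
  obtain ⟨j, hjk, -, -, hrest⟩ := hs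
  exact hrest i (by omega) (by omega)

theorem inR_iff {r : ℕ → ℕ} {h : ℕ} (hs : IsStep k U W) (hU : ∀ i < k, U i ≤ r i)
    (hW : ∀ i < k, W i ≤ r i) : InR k r h U ↔ InR k r h W := by
  have hzero : ∀ i, k ≤ i → (U i = 0 ↔ W i = 0) := fun i hi => by rw [hs.eq_of_le hi]
  unfold InR
  rw [hs.sum_eq_s11]
  exact ⟨fun ⟨_, hz, hsum⟩ => ⟨hW, fun i hi => (hzero i hi).1 (hz i hi), hsum⟩,
    fun ⟨_, hz, hsum⟩ => ⟨hU, fun i hi => (hzero i hi).2 (hz i hi), hsum⟩⟩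

end IsStep

theorem Sw_nonneg (k : ℕ) (x : ℕ → ℕ) : 0 ≤ Sw k x :=
  sum_nonneg fun _ _ => by positivity

theorem Sw_le_of_inR {k h : ℕ} {r x : ℕ → ℕ} (hx : InR k r h x) :
    Sw k x ≤ ∑ j ∈ range k, (j : ℤ) * r j :=
  sum_le_sum fun i hi => mul_le_mul_of_nonneg_left (by exact_mod_cast hx.1 i (mem_range.1 hi))
    (Nat.cast_nonneg i)

theorem IsPath.Sw_eq_s11 {k h t : ℕ} {r : ℕ → ℕ} {P : ℕ → ℕ → ℕ} (hP : IsPath k r h t P) {i : ℕ}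
    (hi : 1 ≤ i) (hit : i ≤ t) : Sw k (P i) = Sw k (P 1) + i - 1 := by
  induction i, hi using Nat.le_induction with
  | base => simp
  | succ i hi ih =>
    rw [(hP.2 i hi (by omega)).Sw_eq_s11, ih (by omega)]
    push_cast
    ring

section Moves

variable {k h : ℕ} {r x : ℕ → ℕ} {j : ℕ}

theorem exists_isStep_to (hx : InR k r h x) (hj : j + 1 < k) (hx1 : 1 ≤ x (j + 1))
    (hxr : x j < r j) : ∃ w, InR k r h w ∧ IsStep k w x := by
  set w := Function.update (Function.update x j (x j + 1)) (j + 1) (x (j + 1) - 1)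
  have hs : IsStep k w x :=
    ⟨j, hj, by simp [w], by simp [w, Nat.sub_add_cancel hx1], fun i hi hi1 => by simp [w, hi, hi1]⟩
  refine ⟨w, (hs.inR_iff (fun i hi => ?_) hx.1).2 hx, hs⟩
  simp only [w, Function.update_apply]
  have := hx.1 i hi
  split_ifs <;> subst_vars <;> omega

theorem exists_isStep_from (hx : InR k r h x) (hj : j + 1 < k) (hx1 : 1 ≤ x j)
    (hxr : x (j + 1) < r (j + 1)) : ∃ w, InR k r h w ∧ IsStep k x w := by
  set w := Function.update (Function.update x j (x j - 1)) (j + 1) (x (j + 1) + 1)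
  have hs : IsStep k x w :=
    ⟨j, hj, by simp [w, Nat.sub_add_cancel hx1], by simp [w], fun i hi hi1 => by simp [w, hi, hi1]⟩
  refine ⟨w, (hs.inR_iff hx.1 (fun i hi => ?_)).1 hx, hs⟩
  simp only [w, Function.update_apply]
  have := hx.1 i hi
  split_ifs <;> subst_vars <;> omega

end Moves

section Extremes

variable {k h m : ℕ} {r x : ℕ → ℕ}

theorem sum_mul_eq_of_full_below (hfull : ∀ j < m, x j = r j) (hzero : ∀ j, m < j → x j = 0)
    (hmk : m ≤ k) (hx0 : ∀ i, k ≤ i → x i = 0) (c : ℕ → ℤ) :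
    ∑ i ∈ range k, c i * x i = ∑ i ∈ range m, c i * r i + c m * x m := by
  have htrunc : ∑ i ∈ range k, c i * x i = ∑ i ∈ range (m + 1), c i * x i := by
    rcases hmk.lt_or_eq with hlt | rfl
    · refine (sum_subset (range_subset_range.2 hlt) fun i _ hi => ?_).symm
      rw [hzero i (by simpa using hi), Nat.cast_zero, mul_zero]
    · rw [sum_range_succ, hx0 m le_rfl, Nat.cast_zero, mul_zero, add_zero]
  rw [htrunc, sum_range_succ]
  exact congrArg (· + _) (sum_congr rfl fun i hi => by rw [hfull i (mem_range.1 hi)])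

theorem sum_mul_eq_of_full_above (hzero : ∀ j < m, x j = 0)
    (hfull : ∀ j, m < j → j < k → x j = r j) (hmk : m < k) (c : ℕ → ℤ) :
    ∑ i ∈ range k, c i * x i = c m * x m + ∑ i ∈ Ico (m + 1) k, c i * r i := by
  rw [← sum_range_add_sum_Ico _ hmk, sum_range_succ,
    sum_eq_zero fun i hi => by rw [hzero i (mem_range.1 hi), Nat.cast_zero, mul_zero], zero_add]
  exact congrArg (_ + ·) (sum_congr rfl fun i hi => by
    rw [mem_Ico] at hi; rw [hfull i hi.1 hi.2])

theorem eq_zero_above_of_lt (hr : ∀ j < k, 0 < r j) (hx0 : ∀ i, k ≤ i → x i = 0)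
    (hnb : ∀ j, j + 1 < k → 1 ≤ x (j + 1) → r j ≤ x j) (hm : x m < r m) :
    ∀ j, m < j → x j = 0 := by
  have hlt : ∀ j, m ≤ j → j < k → x j < r j := by
    intro j hj
    induction j, hj using Nat.le_induction with
    | base => exact fun _ => hm
    | succ j _ ih =>
      intro hj
      have := hnb j hj
      have := ih (by omega)
      have := hr (j + 1) hj
      omega
  intro j hj
  by_cases hjk : j < k
  · obtain ⟨i, rfl⟩ : ∃ i, j = i + 1 := ⟨j - 1, by omega⟩
    have := hnb i hjk
    have := hlt i (by omega) (by omega)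
    omega
  · exact hx0 j (by omega)

theorem eq_zero_below_of_lt (hr : ∀ j < k, 0 < r j)
    (hnf : ∀ j, j + 1 < k → 1 ≤ x j → r (j + 1) ≤ x (j + 1)) (hmk : m < k) (hm : x m < r m) :
    ∀ j < m, x j = 0 := by
  have hlt : ∀ j ≤ m, x j < r j := fun j hj =>
    Nat.decreasingInduction (motive := fun j _ => x j < r j) (fun i hi ih => by
      have := hnf i (by omega)
      have := hr i (by omega)
      omega) hm hj
  intro j hj
  have := hnf j (by omega)
  have := hlt (j + 1) hj
  omega

theorem Sw_eq_of_no_predecessor {I δ : ℕ} (hr : ∀ j < k, 0 < r j) (hIk : I ≤ k)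
    (hI1 : ∑ j ∈ range I, r j ≤ h) (hI2 : ∀ I' ≤ k, (∑ j ∈ range I', r j ≤ h) → I' ≤ I)
    (hδ : (δ : ℤ) = h - ∑ j ∈ range I, (r j : ℤ)) (hx : InR k r h x)
    (hmin : ¬ ∃ w, InR k r h w ∧ IsStep k w x) :
    Sw k x = ∑ j ∈ range I, (j : ℤ) * r j + I * δ := by
  have hnb : ∀ j, j + 1 < k → 1 ≤ x (j + 1) → r j ≤ x j := fun j hj h1 =>
    not_lt.1 fun h2 => hmin (exists_isStep_to hx hj h1 h2)
  obtain ⟨m, hm, hbelow⟩ : ∃ m, (m = k ∨ m < k ∧ x m < r m) ∧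
      ∀ j < m, ¬ (j = k ∨ j < k ∧ x j < r j) :=
    have hex : ∃ m, m = k ∨ m < k ∧ x m < r m := ⟨k, Or.inl rfl⟩
    ⟨Nat.find hex, Nat.find_spec hex, fun _ => Nat.find_min hex⟩
  have hmk : m ≤ k := by omega
  have hfull : ∀ j < m, x j = r j := fun j hj => by
    have := hbelow j hj
    have := hx.1 j (by omega)
    omega
  have hzero : ∀ j, m < j → x j = 0 := by
    rcases hm with rfl | ⟨-, hm⟩
    · exact fun j hj => hx.2.1 j hj.le
    · exact eq_zero_above_of_lt hr hx.2.1 hnb hm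
  have hsplit := sum_mul_eq_of_full_below hfull hzero hmk hx.2.1
  have hh_eq : h = ∑ j ∈ range m, r j + x m := by
    have hsum : (h : ℤ) = ∑ i ∈ range k, (x i : ℤ) := by exact_mod_cast hx.2.2.symm
    have := hsplit 1
    simp only [Pi.one_apply, one_mul] at this
    zify
    linarith
  have hIm : I = m := by
    refine le_antisymm (not_lt.1 fun hmI => ?_) (hI2 m hmk (by omega))
    have hxm : x m < r m := by omega
    have := sum_le_sum_of_subset (f := r) (range_subset_range.2 hmI)
    rw [sum_range_succ] at this
    omega
  subst hIm
  rw [Sw, hsplit, hδ, hh_eq]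
  push_cast
  ring

theorem Sw_eq_of_no_successor {M θ : ℕ} (hr : ∀ j < k, 0 < r j) (hh : 1 ≤ h)
    (hM1 : ∑ j ∈ Ico (M + 1) k, r j ≤ h)
    (hM2 : ∀ M', (∑ j ∈ Ico (M' + 1) k, r j ≤ h) → M ≤ M')
    (hθ : (θ : ℤ) = h - ∑ j ∈ Ico (M + 1) k, (r j : ℤ)) (hx : InR k r h x)
    (hmax : ¬ ∃ w, InR k r h w ∧ IsStep k x w) :
    Sw k x = ∑ j ∈ Ico (M + 1) k, (j : ℤ) * r j + M * θ := by
  have hnf : ∀ j, j + 1 < k → 1 ≤ x j → r (j + 1) ≤ x (j + 1) := fun j hj h1 =>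
    not_lt.1 fun h2 => hmax (exists_isStep_from hx hj h1 h2)
  have hk : 0 < k := Nat.pos_of_ne_zero fun hk0 => by
    have := hx.2.2
    rw [hk0, range_zero, sum_empty] at this
    omega
  obtain ⟨m, hmk, habove, hm⟩ : ∃ m < k, (∀ j, m < j → j < k → ¬ x j < r j) ∧
      (m ≠ 0 → x m < r m) :=
    ⟨Nat.findGreatest (fun j => x j < r j) (k - 1),
      by have := Nat.findGreatest_le (P := fun j => x j < r j) (k - 1); omega,
      fun j hj hjk => Nat.findGreatest_is_greatest (P := fun j => x j < r j) hj (by omega),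
      Nat.findGreatest_of_ne_zero rfl⟩
  have hfull : ∀ j, m < j → j < k → x j = r j := fun j hj hjk => by
    have := habove j hj hjk
    have := hx.1 j hjk
    omega
  have hzero : ∀ j < m, x j = 0 := fun j hj =>
    eq_zero_below_of_lt hr hnf hmk (hm (by omega)) j hj
  have hsplit := sum_mul_eq_of_full_above hzero hfull hmk
  have hh_eq : h = x m + ∑ j ∈ Ico (m + 1) k, r j := by
    have hsum : (h : ℤ) = ∑ i ∈ range k, (x i : ℤ) := by exact_mod_cast hx.2.2.symm
    have := hsplit 1
    simp only [Pi.one_apply, one_mul] at this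
    zify
    linarith
  have hMm : M = m := by
    refine le_antisymm (hM2 m (by omega)) (not_lt.1 fun hMm => ?_)
    have hxm := hm (by omega)
    have := sum_le_sum_of_subset (f := r) (Ico_subset_Ico_left (show M + 1 ≤ m by omega) :
      Ico m k ⊆ Ico (M + 1) k)
    rw [sum_eq_sum_Ico_succ_bot hmk] at this
    omega
  subst hMm
  rw [Sw, hsplit, hθ, hh_eq]
  push_cast
  ring

end Extremes

section Counting

variable {β : Type*} [LinearOrder β]

theorem card_filter_lt_strictMonoOn (S : Finset β) :
    StrictMonoOn (fun v => #(S.filter (· < v))) S := by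
  intro u hu v _ huv
  refine card_lt_card ((ssubset_iff_of_subset fun z hz => ?_).2
    ⟨u, mem_filter.2 ⟨hu, huv⟩, fun h => lt_irrefl u (mem_filter.1 h).2⟩)
  simp only [mem_filter] at hz ⊢
  exact ⟨hz.1, hz.2.trans huv⟩

theorem card_filter_lt_add_card_filter_gt_lt {S : Finset β} {v : β} (hv : v ∈ S) :
    #(S.filter (· < v)) + #(S.filter (v < ·)) < #S := by
  rw [← card_filter_add_card_filter_not (s := S) (· < v)]
  refine Nat.add_lt_add_left (card_lt_card ((ssubset_iff_of_subset fun z hz => ?_).2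
    ⟨v, mem_filter.2 ⟨hv, lt_irrefl v⟩, fun h => lt_irrefl v (mem_filter.1 h).2⟩)) _
  simp only [mem_filter] at hz ⊢
  exact ⟨hz.1, not_lt.2 hz.2.le⟩

theorem sub_le_card_filter_lt {α : Type*} {R : Set α} {step : α → α → Prop} {f : α → ℤ}
    {g : α → β} {S : Finset β} {b c : ℤ} (hS : ∀ x ∈ R, g x ∈ S)
    (hf : ∀ u w, step u w → f w = f u + 1) (hg : ∀ u w, step u w → g u < g w)
    (hb : ∀ x ∈ R, b ≤ f x) (hc : ∀ x ∈ R, (¬ ∃ w ∈ R, step w x) → f x ≤ c) :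
    ∀ x ∈ R, f x - c ≤ #(S.filter (· < g x)) := by
  intro x hx
  induction hn : (f x - b).toNat using Nat.strong_induction_on generalizing x with
  | _ n ih =>
    by_cases hpred : ∃ w ∈ R, step w x
    · obtain ⟨w, hw, hwx⟩ := hpred
      have hfw := hf w x hwx
      have := ih _ (by have := hb w hw; omega) w hw rfl
      have := card_filter_lt_strictMonoOn S (hS w hw) (hS x hx) (hg w x hwx)
      simp only at this
      omega
    · linarith [hc x hx hpred]

end Counting

theorem phi_mem_genSumset {k h : ℕ} {a : ℕ → ℤ} {r x : ℕ → ℕ} (hx : InR k r h x) :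
    phi k a x ∈ genSumset k a r h :=
  ⟨x, hx.1, hx.2.2, rfl⟩

theorem card_filter_lt_phi_eq {k h I M δ θ : ℕ} {a : ℕ → ℤ} {r : ℕ → ℕ}
    (ha : ∀ i j, i < j → j < k → a i < a j) (hr : ∀ j < k, 0 < r j) (hh : 1 ≤ h)
    (hIk : I ≤ k) (hI1 : ∑ j ∈ range I, r j ≤ h)
    (hI2 : ∀ I' ≤ k, (∑ j ∈ range I', r j ≤ h) → I' ≤ I)
    (hM1 : ∑ j ∈ Ico (M + 1) k, r j ≤ h)
    (hM2 : ∀ M', (∑ j ∈ Ico (M' + 1) k, r j ≤ h) → M ≤ M')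
    (hδ : (δ : ℤ) = h - ∑ j ∈ range I, (r j : ℤ))
    (hθ : (θ : ℤ) = h - ∑ j ∈ Ico (M + 1) k, (r j : ℤ))
    (hcard : ((genSumset k a r h).ncard : ℤ) = Lval k I M r δ θ) :
    ∀ x, InR k r h x → (#((genSumset_finite k a r h).toFinset.filter (· < phi k a x)) : ℤ) =
      Sw k x - (∑ j ∈ range I, (j : ℤ) * r j + I * δ) := by
  intro x hx
  set S := (genSumset_finite k a r h).toFinset
  have hS : ∀ y ∈ {y | InR k r h y}, phi k a y ∈ S := fun y hy =>
    (Set.Finite.mem_toFinset _).2 (phi_mem_genSumset hy)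
  have hbelow := sub_le_card_filter_lt (step := IsStep k) (S := S) hS (fun _ _ hs => hs.Sw_eq_s11)
    (fun _ _ hs => hs.phi_lt ha) (fun y _ => Sw_nonneg k y)
    (fun y hy hmin => (Sw_eq_of_no_predecessor hr hIk hI1 hI2 hδ hy (by simpa using hmin)).le)
    x hx
  -- ascending chains are descending chains of the reversed steps, with values read in `ℤᵒᵈ`
  have habove := sub_le_card_filter_lt (β := ℤᵒᵈ) (step := fun u w => IsStep k w u)
    (f := fun y => -Sw k y) (g := fun y => OrderDual.toDual (phi k a y)) (S := S) hS
    (fun _ _ (hs : IsStep k _ _) => by simp only [hs.Sw_eq_s11]; ring)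
    (fun _ _ (hs : IsStep k _ _) => hs.phi_lt ha)
    (fun y hy => neg_le_neg (Sw_le_of_inR hy))
    (fun y hy hmax => neg_le_neg (Sw_eq_of_no_successor hr hh hM1 hM2 hθ hy
      (by simpa using hmax)).ge) x hx
  have htotal := card_filter_lt_add_card_filter_gt_lt (hS x hx)
  have hS_card : (#S : ℤ) = Lval k I M r δ θ := by
    rw [← hcard, Set.ncard_eq_toFinset_card _ (genSumset_finite k a r h)]
  unfold Lval at hS_card
  change _ ≤ (#(S.filter (phi k a x < ·)) : ℤ) at habove
  omega

theorem two_paths_same_values_general (k h I M δ θ t : ℕ) (a : ℕ → ℤ) (r : ℕ → ℕ)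
    (ha : ∀ i j, i < j → j < k → a i < a j)
    (hr : ∀ j < k, 0 < r j)
    (hh2 : 2 ≤ h)
    (hIk : I ≤ k)
    (hI1 : ∑ j ∈ Finset.range I, r j ≤ h)
    (hI2 : ∀ I' ≤ k, (∑ j ∈ Finset.range I', r j ≤ h) → I' ≤ I)
    (hM1 : ∑ j ∈ Finset.Ico (M + 1) k, r j ≤ h)
    (hM2 : ∀ M', (∑ j ∈ Finset.Ico (M' + 1) k, r j ≤ h) → M ≤ M')
    (hδ : (δ : ℤ) = (h : ℤ) - ∑ j ∈ Finset.range I, (r j : ℤ))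
    (hθ : (θ : ℤ) = (h : ℤ) - ∑ j ∈ Finset.Ico (M + 1) k, (r j : ℤ))
    (hcard : ((genSumset k a r h).ncard : ℤ) = Lval k I M r δ θ)
    (P Q : ℕ → ℕ → ℕ)
    (hP : IsPath k r h t P) (hQ : IsPath k r h t Q)
    (hstart : P 1 = Q 1) :
    ∀ i, 2 ≤ i → i ≤ t - 1 →
      ∑ j ∈ Finset.range k, (P i j : ℤ) * a j
        = ∑ j ∈ Finset.range k, (Q i j : ℤ) * a j := by
  intro i hi2 hit
  have hPi := hP.1 i (by omega) (by omega)
  have hQi := hQ.1 i (by omega) (by omega)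
  have hSw : Sw k (P i) = Sw k (Q i) := by
    rw [hP.Sw_eq_s11 (by omega) (by omega), hQ.Sw_eq_s11 (by omega) (by omega), hstart]
  have hcount := card_filter_lt_phi_eq ha hr (by omega) hIk hI1 hI2 hM1 hM2 hδ hθ hcard
  change phi k a (P i) = phi k a (Q i)
  refine (card_filter_lt_strictMonoOn _).injOn
    ((genSumset_finite k a r h).mem_toFinset.2 (phi_mem_genSumset hPi))
    ((genSumset_finite k a r h).mem_toFinset.2 (phi_mem_genSumset hQi)) ?_
  exact_mod_cast (hcount _ hPi).trans (hSw ▸ (hcount _ hQi).symm)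

theorem two_paths_same_values (k h I M δ θ t : ℕ) (a : ℕ → ℤ) (r : ℕ → ℕ)
    (ha : ∀ i j, i < j → j < k → a i < a j)
    (hr : ∀ j < k, 0 < r j)
    (hh2 : 2 ≤ h) (hhk : h ≤ ∑ j ∈ Finset.range k, r j)
    (hIk : I ≤ k)
    (hI1 : ∑ j ∈ Finset.range I, r j ≤ h)
    (hI2 : ∀ I' ≤ k, (∑ j ∈ Finset.range I', r j ≤ h) → I' ≤ I)
    (hM1 : ∑ j ∈ Finset.Ico (M + 1) k, r j ≤ h)
    (hM2 : ∀ M', (∑ j ∈ Finset.Ico (M' + 1) k, r j ≤ h) → M ≤ M')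
    (hδ : (δ : ℤ) = (h : ℤ) - ∑ j ∈ Finset.range I, (r j : ℤ))
    (hθ : (θ : ℤ) = (h : ℤ) - ∑ j ∈ Finset.Ico (M + 1) k, (r j : ℤ))
    (hcard : ((genSumset k a r h).ncard : ℤ) = Lval k I M r δ θ)
    (P Q : ℕ → ℕ → ℕ) (ht : 1 ≤ t)
    (hP : IsPath k r h t P) (hQ : IsPath k r h t Q)
    (hstart : P 1 = Q 1) (hend : P t = Q t)
    (hne : ∃ i, 1 ≤ i ∧ i ≤ t ∧ P i ≠ Q i) :
    ∀ i, 2 ≤ i → i ≤ t - 1 →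
      ∑ j ∈ Finset.range k, (P i j : ℤ) * a j
        = ∑ j ∈ Finset.range k, (Q i j : ℤ) * a j :=
  two_paths_same_values_general k h I M δ θ t a r ha hr hh2 hIk hI1 hI2 hM1 hM2 hδ hθ hcard P Q hP
    hQ hstart
end

section
/- Let A = {a_0 < a_1 < a_2} be a set of 3 integers, r = (r_0, 1, r_2) with r_0, r_2 positive integers, and h an integer with 2 ≤ h ≤ r_0 + 1 + r_2 − 2. Then |h^{(r)}A| = L(r,h) (regardless of whether A is an arithmetic progression). -/
open Finset

/-!
With `r₁ = 1`, an element `(s₀, s₁, s₂)` of `R(r,h)` is determined by its weight `n = s₁ + 2 s₂`: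
`s₁` is the parity of `n`. Its sum `h a₀ + s₁ (a₁ - a₀) + s₂ (a₂ - a₀)` is injective in `n`, since
`0 < a₁ - a₀ < a₂ - a₀` keeps `a₁ - a₀` from being a multiple of `a₂ - a₀`. The weights that occur
are exactly the integers in `[max 0 (2(h - r₀) - 1), min (2h) (2r₂ + 1)]`, and the greedy fillings
that define `L(r,h)` have exactly these two endpoints as weights: `∑_{j<I} j r_j + Iδ` is the least
and `∑_{j>M} j r_j + Mθ` the largest. So `|h^{(r)}A|` is the length of that interval, `L(r,h)`.
-/

def sumOfWeight (a : ℕ → ℤ) (h n : ℕ) : ℤ :=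
  h * a 0 + (n % 2 : ℕ) * (a 1 - a 0) + (n / 2 : ℕ) * (a 2 - a 0)

theorem Int.mul_ne_of_pos_of_lt {d e : ℤ} (hd : 0 < d) (hde : d < e) (k : ℤ) : k * e ≠ d := by
  intro hk
  rcases le_or_gt k 0 with hk | hk <;> nlinarith

theorem sumOfWeight_injective {a : ℕ → ℤ} (ha01 : a 0 < a 1) (ha12 : a 1 < a 2) (h : ℕ) :
    Function.Injective (sumOfWeight a h) := by
  intro m n hmn
  have hdiff : (((n / 2 : ℕ) : ℤ) - (m / 2 : ℕ)) * (a 2 - a 0)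
      = (((m % 2 : ℕ) : ℤ) - (n % 2 : ℕ)) * (a 1 - a 0) := by
    unfold sumOfWeight at hmn
    linarith
  have hpar : m % 2 = n % 2 := by
    by_contra hne
    have hd : 0 < a 1 - a 0 := by linarith
    have hde : a 1 - a 0 < a 2 - a 0 := by linarith
    rcases (by omega : m % 2 = 0 ∧ n % 2 = 1 ∨ m % 2 = 1 ∧ n % 2 = 0) with ⟨hm, hn⟩ | ⟨hm, hn⟩ <;>
      simp only [hm, hn, Nat.cast_zero, Nat.cast_one] at hdiff
    · exact Int.mul_ne_of_pos_of_lt hd hde ((m / 2 : ℕ) - (n / 2 : ℕ)) (by linarith)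
    · exact Int.mul_ne_of_pos_of_lt hd hde ((n / 2 : ℕ) - (m / 2 : ℕ)) (by linarith)
  have hhalf : m / 2 = n / 2 := by
    rw [hpar, sub_self, zero_mul, mul_eq_zero] at hdiff
    omega
  omega

-- `2 * (h - r 0) - 1` is truncated subtraction: it stands for `max 0 (2(h - r₀) - 1)`.
theorem genSumset_three_eq_image (a : ℕ → ℤ) {r : ℕ → ℕ} (hr1 : r 1 = 1) (h : ℕ) :
    genSumset 3 a r h =
      ((Icc (2 * (h - r 0) - 1) (min (2 * h) (2 * r 2 + 1))).image (sumOfWeight a h) :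
        Set ℤ) := by
  ext z
  simp only [genSumset, Set.mem_ofPred_eq, coe_image, coe_Icc, Set.mem_image, Set.mem_Icc,
    sum_range_succ, sum_range_zero, zero_add]
  constructor
  · rintro ⟨s, hs, hsum, rfl⟩
    have h0 := hs 0 (by norm_num)
    have h1 := hs 1 (by norm_num)
    have h2 := hs 2 (by norm_num)
    refine ⟨s 1 + 2 * s 2, ⟨by omega, by omega⟩, ?_⟩
    have hmod : (s 1 + 2 * s 2) % 2 = s 1 := by omega
    have hdiv : (s 1 + 2 * s 2) / 2 = s 2 := by omega
    rw [sumOfWeight, hmod, hdiv, ← hsum]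
    push_cast
    ring
  · rintro ⟨n, ⟨hlo, hhi⟩, rfl⟩
    refine ⟨fun i => if i = 0 then h - n % 2 - n / 2 else if i = 1 then n % 2 else n / 2,
      ?_, ?_, ?_⟩
    · intro i hi
      interval_cases i <;> simp only [Nat.reduceEqDiff, ↓reduceIte] <;> omega
    · simp only [Nat.reduceEqDiff, ↓reduceIte]
      omega
    · have hs0 : ((h - n % 2 - n / 2 : ℕ) : ℤ) = h - (n % 2 : ℕ) - (n / 2 : ℕ) := by omega
      simp only [Nat.reduceEqDiff, ↓reduceIte, sumOfWeight, hs0]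
      ring

theorem sum_range_mul_add_mul_eq {r : ℕ → ℕ} (hr1 : r 1 = 1) {h I δ : ℕ}
    (hh : h ≤ r 0 + 1 + r 2) (hIk : I ≤ 3) (hI1 : ∑ j ∈ range I, r j ≤ h)
    (hI2 : ∀ I' ≤ 3, (∑ j ∈ range I', r j ≤ h) → I' ≤ I)
    (hδ : (δ : ℤ) = h - ∑ j ∈ range I, (r j : ℤ)) :
    ∑ j ∈ range I, (j : ℤ) * r j + I * δ = ((2 * (h - r 0) - 1 : ℕ) : ℤ) := by
  have h1 := hI2 1
  have h2 := hI2 2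
  simp only [sum_range_succ, sum_range_zero, hr1] at h1 h2
  interval_cases I <;> simp only [sum_range_succ, sum_range_zero, hr1] at hI1 hδ ⊢ <;> omega

theorem sum_Ico_mul_add_mul_eq {r : ℕ → ℕ} (hr1 : r 1 = 1) {h M θ : ℕ}
    (hM1 : ∑ j ∈ Ico (M + 1) 3, r j ≤ h)
    (hM2 : ∀ M', (∑ j ∈ Ico (M' + 1) 3, r j ≤ h) → M ≤ M')
    (hθ : (θ : ℤ) = h - ∑ j ∈ Ico (M + 1) 3, (r j : ℤ)) :
    ∑ j ∈ Ico (M + 1) 3, (j : ℤ) * r j + M * θ = ((min (2 * h) (2 * r 2 + 1) : ℕ) : ℤ) := by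
  have h0 := hM2 0
  have h1 := hM2 1
  have h2 := hM2 2
  simp only [sum_Ico_eq_sum_range, sum_range_succ, sum_range_zero, hr1] at h0 h1 h2
  norm_num at h0 h1 h2
  interval_cases M <;> simp only [sum_Ico_eq_sum_range, sum_range_succ, sum_range_zero, hr1]
    at hM1 hθ ⊢ <;> norm_num at hM1 hθ ⊢ <;> omega

theorem three_elt_r1_eq_one_general (h I M δ θ : ℕ) (a₀ a₁ a₂ : ℤ) (r₀ r₂ : ℕ)
    (ha01 : a₀ < a₁) (ha12 : a₁ < a₂)
    (hhk : h + 2 ≤ r₀ + 1 + r₂)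
    (r : ℕ → ℕ) (hrdef : r = fun j => if j = 0 then r₀ else if j = 1 then 1 else r₂)
    (a : ℕ → ℤ) (hadef : a = fun j => if j = 0 then a₀ else if j = 1 then a₁ else a₂)
    (hIk : I ≤ 3)
    (hI1 : ∑ j ∈ Finset.range I, r j ≤ h)
    (hI2 : ∀ I' ≤ 3, (∑ j ∈ Finset.range I', r j ≤ h) → I' ≤ I)
    (hM1 : ∑ j ∈ Finset.Ico (M + 1) 3, r j ≤ h)
    (hM2 : ∀ M', (∑ j ∈ Finset.Ico (M' + 1) 3, r j ≤ h) → M ≤ M')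
    (hδ : (δ : ℤ) = (h : ℤ) - ∑ j ∈ Finset.range I, (r j : ℤ))
    (hθ : (θ : ℤ) = (h : ℤ) - ∑ j ∈ Finset.Ico (M + 1) 3, (r j : ℤ)) :
    ((genSumset 3 a r h).ncard : ℤ) = Lval 3 I M r δ θ := by
  have hr₀ : r 0 = r₀ := by simp [hrdef]
  have hr₁ : r 1 = 1 := by simp [hrdef]
  have hr₂ : r 2 = r₂ := by simp [hrdef]
  have hinj : Function.Injective (sumOfWeight a h) :=
    sumOfWeight_injective (by simpa [hadef] using ha01) (by simpa [hadef] using ha12) h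
  have hmin := sum_range_mul_add_mul_eq hr₁ (by omega) hIk hI1 hI2 hδ
  have hmax := sum_Ico_mul_add_mul_eq hr₁ hM1 hM2 hθ
  rw [genSumset_three_eq_image a hr₁, Set.ncard_coe_finset, card_image_of_injective _ hinj,
    Nat.card_Icc, Lval]
  omega

theorem three_elt_r1_eq_one (h I M δ θ : ℕ) (a₀ a₁ a₂ : ℤ) (r₀ r₂ : ℕ)
    (ha01 : a₀ < a₁) (ha12 : a₁ < a₂)
    (hr0 : 0 < r₀) (hr2 : 0 < r₂)
    (hh2 : 2 ≤ h) (hhk : h + 2 ≤ r₀ + 1 + r₂)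
    (r : ℕ → ℕ) (hrdef : r = fun j => if j = 0 then r₀ else if j = 1 then 1 else r₂)
    (a : ℕ → ℤ) (hadef : a = fun j => if j = 0 then a₀ else if j = 1 then a₁ else a₂)
    (hIk : I ≤ 3)
    (hI1 : ∑ j ∈ Finset.range I, r j ≤ h)
    (hI2 : ∀ I' ≤ 3, (∑ j ∈ Finset.range I', r j ≤ h) → I' ≤ I)
    (hM1 : ∑ j ∈ Finset.Ico (M + 1) 3, r j ≤ h)
    (hM2 : ∀ M', (∑ j ∈ Finset.Ico (M' + 1) 3, r j ≤ h) → M ≤ M')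
    (hδ : (δ : ℤ) = (h : ℤ) - ∑ j ∈ Finset.range I, (r j : ℤ))
    (hθ : (θ : ℤ) = (h : ℤ) - ∑ j ∈ Finset.Ico (M + 1) 3, (r j : ℤ)) :
    ((genSumset 3 a r h).ncard : ℤ) = Lval 3 I M r δ θ :=
  three_elt_r1_eq_one_general h I M δ θ a₀ a₁ a₂ r₀ r₂ ha01 ha12 hhk r hrdef a hadef hIk hI1 hI2 hM1
    hM2 hδ hθ
end

section
/- Let A = {a_0 < a_1 < a_2} be a set of 3 integers, r = (r_0, r_1, r_2) positive integers with r_1 ≥ 2, and h an integer with 2 ≤ h ≤ r_0 + r_1 + r_2 − 2. Then |h^{(r)}A| = L(r,h) if and only if a_1 − a_0 = a_2 − a_1. -/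
open Finset

/-!
Write an element of `h^{(r)}A` as `h a₀ + s₁ (a₁ - a₀) + s₂ (a₂ - a₀)`, and call
`ℓ = s₁ + 2 s₂` its level; then the element equals `h a₀ + ℓ (a₁ - a₀) + s₂ (a₂ - 2 a₁ + a₀)`.
The attained levels form an interval of length `L(r,h) - 1`. For an arithmetic progression the
element depends on the level only, so `|h^{(r)}A| = L(r,h)`. Otherwise the element is strictly
increasing in `ℓ` both along the smallest and along the largest admissible `s₂` at level `ℓ`, and
these differ at some level `m`. Following one branch up to level `m` and the other one from `m`
on, in the order given by the sign of `a₂ - 2 a₁ + a₀`, gives `L(r,h) + 1` distinct elements.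
-/

lemma strictMono_add_mul_add_mul {x c : ℤ} (hx : 0 < x) (hxc : 0 < x + c) {w : ℕ → ℕ}
    (hw : ∀ ℓ, w (ℓ + 1) = w ℓ ∨ w (ℓ + 1) = w ℓ + 1) (C : ℤ) :
    StrictMono fun ℓ : ℕ => C + ℓ * x + w ℓ * c := by
  refine strictMono_nat_of_lt_succ fun ℓ => ?_
  rcases hw ℓ with hwℓ | hwℓ <;> simp only [hwℓ] <;> push_cast <;> linarith

lemma add_two_le_card_of_strictMono {β : Type*} [LinearOrder β] {S : Finset β}
    {g₁ g₂ : ℕ → β} (hg₁ : StrictMono g₁) (hg₂ : StrictMono g₂) {a m b : ℕ} (hm : m ∈ Icc a b)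
    (hlt : g₁ m < g₂ m) (hS₁ : ∀ ℓ ∈ Icc a m, g₁ ℓ ∈ S) (hS₂ : ∀ ℓ ∈ Icc m b, g₂ ℓ ∈ S) :
    b + 2 ≤ S.card + a := by
  have hdisj : Disjoint ((Icc a m).image g₁) ((Icc m b).image g₂) := by
    simp only [disjoint_left, mem_image, mem_Icc, not_exists, not_and]
    rintro _ ⟨i, hi, rfl⟩ j hj hij
    have hle : g₂ j ≤ g₁ m := hij ▸ hg₁.monotone hi.2
    exact (hlt.trans_le (hg₂.monotone hj.1)).not_ge hle
  have hsub : (Icc a m).image g₁ ∪ (Icc m b).image g₂ ⊆ S := by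
    simp only [union_subset_iff, image_subset_iff]
    exact ⟨hS₁, hS₂⟩
  have hcard := card_le_card hsub
  rw [card_union_of_disjoint hdisj, card_image_of_injective _ hg₁.injective,
    card_image_of_injective _ hg₂.injective, Nat.card_Icc, Nat.card_Icc] at hcard
  simp only [mem_Icc] at hm
  omega

/-- The pairs `(s₁, s₂)` for which `s₀ := h - s₁ - s₂` completes them to coefficients
`0 ≤ sᵢ ≤ rᵢ` with `s₀ + s₁ + s₂ = h`. -/
def admissible (r₀ r₁ r₂ h : ℕ) : Finset (ℕ × ℕ) :=
  (range (r₁ + 1) ×ˢ range (r₂ + 1)).filter fun s => s.1 + s.2 ≤ h ∧ h ≤ r₀ + s.1 + s.2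

lemma mem_admissible {r₀ r₁ r₂ h : ℕ} {s : ℕ × ℕ} :
    s ∈ admissible r₀ r₁ r₂ h ↔ s.1 ≤ r₁ ∧ s.2 ≤ r₂ ∧ s.1 + s.2 ≤ h ∧ h ≤ r₀ + s.1 + s.2 := by
  simp only [admissible, mem_filter, mem_product, mem_range, Nat.lt_succ_iff, and_assoc]

/-! The least and greatest level `s₁ + 2 s₂` of an admissible pair (natural subtraction truncates
at `0`, as intended), and, at level `ℓ`, the bounds of the interval of admissible `s₂`. -/

def levelMin (r₀ r₁ h : ℕ) : ℕ := (h - r₀) + (h - (r₀ + r₁))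

def levelMax (r₁ r₂ h : ℕ) : ℕ := min h r₂ + min h (r₁ + r₂)

def lowSecond (r₁ h ℓ : ℕ) : ℕ := max (ℓ - h) ((ℓ + 1 - r₁) / 2)

def highSecond (r₀ r₂ h ℓ : ℕ) : ℕ := min (min r₂ (ℓ - (h - r₀))) (ℓ / 2)

section
variable {r₀ r₁ r₂ h ℓ : ℕ}

lemma lowSecond_mem_admissible (hr₁ : 0 < r₁)
    (hℓ : ℓ ∈ Icc (levelMin r₀ r₁ h) (levelMax r₁ r₂ h)) :
    2 * lowSecond r₁ h ℓ ≤ ℓ ∧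
      (ℓ - 2 * lowSecond r₁ h ℓ, lowSecond r₁ h ℓ) ∈ admissible r₀ r₁ r₂ h := by
  simp only [mem_Icc, levelMin, levelMax] at hℓ
  simp only [mem_admissible, lowSecond]
  omega

lemma highSecond_mem_admissible (hr₁ : 0 < r₁)
    (hℓ : ℓ ∈ Icc (levelMin r₀ r₁ h) (levelMax r₁ r₂ h)) :
    2 * highSecond r₀ r₂ h ℓ ≤ ℓ ∧
      (ℓ - 2 * highSecond r₀ r₂ h ℓ, highSecond r₀ r₂ h ℓ) ∈ admissible r₀ r₁ r₂ h := by
  simp only [mem_Icc, levelMin, levelMax] at hℓ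
  simp only [mem_admissible, highSecond]
  omega

lemma lowSecond_succ (r₁ h ℓ : ℕ) :
    lowSecond r₁ h (ℓ + 1) = lowSecond r₁ h ℓ ∨
      lowSecond r₁ h (ℓ + 1) = lowSecond r₁ h ℓ + 1 := by
  simp only [lowSecond]
  omega

lemma highSecond_succ (r₀ r₂ h ℓ : ℕ) :
    highSecond r₀ r₂ h (ℓ + 1) = highSecond r₀ r₂ h ℓ ∨
      highSecond r₀ r₂ h (ℓ + 1) = highSecond r₀ r₂ h ℓ + 1 := by
  simp only [highSecond]
  omega

lemma exists_lowSecond_lt_highSecond (hr₀ : 0 < r₀) (hr₁ : 2 ≤ r₁) (hr₂ : 0 < r₂) (hh : 2 ≤ h)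
    (hhr : h + 2 ≤ r₀ + r₁ + r₂) :
    ∃ ℓ ∈ Icc (levelMin r₀ r₁ h) (levelMax r₁ r₂ h), lowSecond r₁ h ℓ < highSecond r₀ r₂ h ℓ := by
  -- the level of a pair `(s₁, s₂)` with `s₁ ≥ 2`, `s₂ < r₂` and `s₁ + s₂ > h - r₀`,
  -- so that `(s₁ - 2, s₂ + 1)` is admissible too
  set t := min h (r₁ + r₂ - 1)
  refine ⟨min r₁ t + 2 * (t - min r₁ t), ?_⟩
  simp only [mem_Icc, levelMin, levelMax, lowSecond, highSecond]
  omega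

lemma image_level_admissible (hr₁ : 0 < r₁) :
    (admissible r₀ r₁ r₂ h).image (fun s => s.1 + 2 * s.2) =
      Icc (levelMin r₀ r₁ h) (levelMax r₁ r₂ h) := by
  ext ℓ
  simp only [mem_image]
  constructor
  · rintro ⟨s, hs, rfl⟩
    rw [mem_admissible] at hs
    simp only [mem_Icc, levelMin, levelMax]
    omega
  · intro hℓ
    obtain ⟨hle, hmem⟩ := lowSecond_mem_admissible hr₁ hℓ
    exact ⟨_, hmem, by omega⟩

lemma card_image_admissible_of_eq_two_mul {x : ℤ} (hx : x ≠ 0) (hr₁ : 0 < r₁) (C : ℤ) :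
    ((admissible r₀ r₁ r₂ h).image fun s => C + s.1 * x + s.2 * (2 * x)).card
      = levelMax r₁ r₂ h + 1 - levelMin r₀ r₁ h := by
  have hfactor : (fun s : ℕ × ℕ => C + s.1 * x + s.2 * (2 * x)) =
      (fun ℓ : ℕ => C + ℓ * x) ∘ fun s => s.1 + 2 * s.2 := by
    ext s
    simp only [Function.comp_apply]
    push_cast
    ring
  have hinj : Function.Injective fun ℓ : ℕ => C + ℓ * x := fun i j hij => by
    simpa [hx] using hij
  rw [hfactor, ← image_image, card_image_of_injective _ hinj, image_level_admissible hr₁,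
    Nat.card_Icc]

lemma add_two_le_card_image_admissible_of_ne_two_mul {x y : ℤ} (hx : 0 < x) (hxy : x < y)
    (hy : y ≠ 2 * x) (hr₀ : 0 < r₀) (hr₁ : 2 ≤ r₁) (hr₂ : 0 < r₂) (hh : 2 ≤ h)
    (hhr : h + 2 ≤ r₀ + r₁ + r₂) (C : ℤ) :
    levelMax r₁ r₂ h + 2 ≤
      ((admissible r₀ r₁ r₂ h).image fun s => C + s.1 * x + s.2 * y).card + levelMin r₀ r₁ h := by
  set S := (admissible r₀ r₁ r₂ h).image fun s => C + s.1 * x + s.2 * y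
  set g : (ℕ → ℕ) → ℕ → ℤ := fun w ℓ => C + ℓ * x + w ℓ * (y - 2 * x)
  have hmono : ∀ w : ℕ → ℕ, (∀ ℓ, w (ℓ + 1) = w ℓ ∨ w (ℓ + 1) = w ℓ + 1) → StrictMono (g w) :=
    fun w hw => strictMono_add_mul_add_mul hx (by linarith) hw C
  have hmem : ∀ w : ℕ → ℕ, ∀ ℓ, 2 * w ℓ ≤ ℓ → (ℓ - 2 * w ℓ, w ℓ) ∈ admissible r₀ r₁ r₂ h →
      g w ℓ ∈ S := fun w ℓ hle hw => by
    refine mem_image.mpr ⟨_, hw, ?_⟩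
    simp only [g, Nat.cast_sub hle]
    push_cast
    ring
  have hlow : ∀ ℓ ∈ Icc (levelMin r₀ r₁ h) (levelMax r₁ r₂ h), g (lowSecond r₁ h) ℓ ∈ S :=
    fun ℓ hℓ => hmem _ ℓ (lowSecond_mem_admissible (by omega) hℓ).1
      (lowSecond_mem_admissible (by omega) hℓ).2
  have hhigh : ∀ ℓ ∈ Icc (levelMin r₀ r₁ h) (levelMax r₁ r₂ h), g (highSecond r₀ r₂ h) ℓ ∈ S :=
    fun ℓ hℓ => hmem _ ℓ (highSecond_mem_admissible (by omega) hℓ).1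
      (highSecond_mem_admissible (by omega) hℓ).2
  obtain ⟨m, hm, hlt⟩ := exists_lowSecond_lt_highSecond hr₀ hr₁ hr₂ hh hhr
  have hlt' : (lowSecond r₁ h m : ℤ) < highSecond r₀ r₂ h m := by exact_mod_cast hlt
  have hIcc := mem_Icc.mp hm
  rcases hy.lt_or_gt with hneg | hpos
  · refine add_two_le_card_of_strictMono (hmono _ (highSecond_succ r₀ r₂ h))
      (hmono _ (lowSecond_succ r₁ h)) hm ?_ (fun ℓ hℓ => hhigh ℓ ?_) (fun ℓ hℓ => hlow ℓ ?_)
    · simp only [g]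
      nlinarith
    all_goals simp only [mem_Icc] at hℓ ⊢; omega
  · refine add_two_le_card_of_strictMono (hmono _ (lowSecond_succ r₁ h))
      (hmono _ (highSecond_succ r₀ r₂ h)) hm ?_ (fun ℓ hℓ => hlow ℓ ?_) (fun ℓ hℓ => hhigh ℓ ?_)
    · simp only [g]
      nlinarith
    all_goals simp only [mem_Icc] at hℓ ⊢; omega

end

lemma genSumset_three_eq_image_s13 (a : ℕ → ℤ) (r : ℕ → ℕ) (h : ℕ) :
    genSumset 3 a r h = ↑((admissible (r 0) (r 1) (r 2) h).image
      fun s => h * a 0 + s.1 * (a 1 - a 0) + s.2 * (a 2 - a 0)) := by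
  ext z
  simp only [genSumset, Set.mem_ofPred_eq, coe_image, Set.mem_image, mem_coe, mem_admissible,
    sum_range_succ, sum_range_zero, zero_add]
  constructor
  · rintro ⟨s, hs, hsum, rfl⟩
    have hs₀ := hs 0 (by norm_num)
    refine ⟨(s 1, s 2), ⟨hs 1 (by norm_num), hs 2 (by norm_num), by omega, by omega⟩, ?_⟩
    have hsum' : (h : ℤ) = s 0 + s 1 + s 2 := by exact_mod_cast hsum.symm
    rw [hsum']
    ring
  · rintro ⟨s, hs, rfl⟩
    refine ⟨fun i => if i = 0 then h - s.1 - s.2 else if i = 1 then s.1 else s.2, fun i hi => ?_,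
      by simp only [↓reduceIte, one_ne_zero, OfNat.ofNat_ne_zero, OfNat.ofNat_ne_one]; omega, ?_⟩
    · interval_cases i <;> simp only [↓reduceIte, one_ne_zero, OfNat.ofNat_ne_zero,
        OfNat.ofNat_ne_one] <;> omega
    · simp only [↓reduceIte, one_ne_zero, OfNat.ofNat_ne_zero, OfNat.ofNat_ne_one]
      rw [Nat.cast_sub (by omega), Nat.cast_sub (by omega)]
      ring

/-! `I`, `δ` and `M`, `θ` describe the admissible coefficient vectors of least and of greatest
level: fill the smallest (resp. largest) indices up to their bounds `rⱼ` first. -/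

lemma levelMin_eq_greedy {r : ℕ → ℕ} {h I δ : ℕ} (hh : h ≤ r 0 + r 1 + r 2) (hIk : I ≤ 3)
    (hI1 : ∑ j ∈ range I, r j ≤ h) (hI2 : ∀ I' ≤ 3, (∑ j ∈ range I', r j ≤ h) → I' ≤ I)
    (hδ : (δ : ℤ) = (h : ℤ) - ∑ j ∈ range I, (r j : ℤ)) :
    (levelMin (r 0) (r 1) h : ℤ) = ∑ j ∈ range I, (j : ℤ) * r j + I * δ := by
  have h1 := hI2 1
  have h2 := hI2 2
  simp only [sum_range_succ, sum_range_zero] at h1 h2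
  interval_cases I <;> simp only [sum_range_succ, sum_range_zero] at hI1 hδ ⊢ <;>
    simp only [levelMin] <;> push_cast <;> omega

lemma levelMax_eq_greedy {r : ℕ → ℕ} {h M θ : ℕ}
    (hM1 : ∑ j ∈ Ico (M + 1) 3, r j ≤ h) (hM2 : ∀ M', (∑ j ∈ Ico (M' + 1) 3, r j ≤ h) → M ≤ M')
    (hθ : (θ : ℤ) = (h : ℤ) - ∑ j ∈ Ico (M + 1) 3, (r j : ℤ)) :
    (levelMax (r 1) (r 2) h : ℤ) = ∑ j ∈ Ico (M + 1) 3, (j : ℤ) * r j + M * θ := by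
  have h0 := hM2 0
  have h1 := hM2 1
  have hM : M ≤ 2 := hM2 2 (by simp)
  interval_cases M <;>
    simp only [levelMax, sum_Ico_eq_sum_range, Nat.reduceAdd, Nat.reduceSub, sum_range_succ,
      sum_range_zero, Nat.not_ofNat_le_one, nonpos_iff_eq_zero, one_ne_zero, imp_false,
      not_le] at h0 h1 hM1 hθ ⊢ <;>
    push_cast at hθ ⊢ <;> omega

lemma Lval_three_eq {r : ℕ → ℕ} {h I M δ θ : ℕ} (hh : h ≤ r 0 + r 1 + r 2) (hIk : I ≤ 3)
    (hI1 : ∑ j ∈ range I, r j ≤ h) (hI2 : ∀ I' ≤ 3, (∑ j ∈ range I', r j ≤ h) → I' ≤ I)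
    (hM1 : ∑ j ∈ Ico (M + 1) 3, r j ≤ h) (hM2 : ∀ M', (∑ j ∈ Ico (M' + 1) 3, r j ≤ h) → M ≤ M')
    (hδ : (δ : ℤ) = (h : ℤ) - ∑ j ∈ range I, (r j : ℤ))
    (hθ : (θ : ℤ) = (h : ℤ) - ∑ j ∈ Ico (M + 1) 3, (r j : ℤ)) :
    Lval 3 I M r δ θ = (levelMax (r 1) (r 2) h : ℤ) - levelMin (r 0) (r 1) h + 1 := by
  rw [Lval, levelMax_eq_greedy hM1 hM2 hθ, levelMin_eq_greedy hh hIk hI1 hI2 hδ]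
  ring

theorem three_elt_eq_iff_AP (h I M δ θ : ℕ) (a₀ a₁ a₂ : ℤ) (r₀ r₁ r₂ : ℕ)
    (ha01 : a₀ < a₁) (ha12 : a₁ < a₂)
    (hr0 : 0 < r₀) (hr1 : 2 ≤ r₁) (hr2 : 0 < r₂)
    (hh2 : 2 ≤ h) (hhk : h + 2 ≤ r₀ + r₁ + r₂)
    (r : ℕ → ℕ) (hrdef : r = fun j => if j = 0 then r₀ else if j = 1 then r₁ else r₂)
    (a : ℕ → ℤ) (hadef : a = fun j => if j = 0 then a₀ else if j = 1 then a₁ else a₂)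
    (hIk : I ≤ 3)
    (hI1 : ∑ j ∈ Finset.range I, r j ≤ h)
    (hI2 : ∀ I' ≤ 3, (∑ j ∈ Finset.range I', r j ≤ h) → I' ≤ I)
    (hM1 : ∑ j ∈ Finset.Ico (M + 1) 3, r j ≤ h)
    (hM2 : ∀ M', (∑ j ∈ Finset.Ico (M' + 1) 3, r j ≤ h) → M ≤ M')
    (hδ : (δ : ℤ) = (h : ℤ) - ∑ j ∈ Finset.range I, (r j : ℤ))
    (hθ : (θ : ℤ) = (h : ℤ) - ∑ j ∈ Finset.Ico (M + 1) 3, (r j : ℤ)) :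
    ((genSumset 3 a r h).ncard : ℤ) = Lval 3 I M r δ θ ↔ a₁ - a₀ = a₂ - a₁ := by
  obtain ⟨er₀, er₁, er₂⟩ : r 0 = r₀ ∧ r 1 = r₁ ∧ r 2 = r₂ := by simp [hrdef]
  obtain ⟨ea₀, ea₁, ea₂⟩ : a 0 = a₀ ∧ a 1 = a₁ ∧ a 2 = a₂ := by simp [hadef]
  rw [Lval_three_eq (by omega) hIk hI1 hI2 hM1 hM2 hδ hθ, genSumset_three_eq_image_s13,
    Set.ncard_coe_finset, er₀, er₁, er₂, ea₀, ea₁, ea₂]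
  have hlevels : levelMin r₀ r₁ h ≤ levelMax r₁ r₂ h := by simp only [levelMin, levelMax]; omega
  constructor
  · intro hcard
    by_contra hnotAP
    have hbound := add_two_le_card_image_admissible_of_ne_two_mul (x := a₁ - a₀)
      (y := a₂ - a₀) (by omega) (by omega) (by omega) hr0 hr1 hr2 hh2 hhk (h * a₀)
    omega
  · intro hAP
    rw [show a₂ - a₀ = 2 * (a₁ - a₀) by omega,
      card_image_admissible_of_eq_two_mul (by omega) (by omega)]
    omega
end
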